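/- arXiv:1405.7092 — 14 statements merged into one kernel-verified Lean document; each statement's English description precedes it below -/
import Mathlib

section
/- Every connected graph that contains no induced copy of the paw (the graph obtained from a triangle by adding a pendant vertex) is either a complete multipartite graph or triangle-free. -/
/-- The paw: triangle a,b,c plus a pendant vertex d adjacent to a. -/
def paw : SimpleGraph (Fin 4) :=
  SimpleGraph.fromRel (fun a b => (a.val, b.val) ∈ [(0,1),(0,2),(1,2),(0,3)])

/-- A graph is complete multipartite iff there is an equivalence relation
(partition into parts) such that two vertices are adjacent iff inequivalent. -/
def IsCompleteMultipartite {V : Type*} (G : SimpleGraph V) : Prop :=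
  ∃ s : Setoid V, ∀ u v, G.Adj u v ↔ ¬ s.r u v

/-!
Paw-freeness says exactly that a neighbour `d` of a vertex `a` of a triangle `abc` is adjacent to
`b` or `c`. So every neighbour of a triangle vertex is again a triangle vertex; if `G` has one
triangle then, by connectivity, every vertex and hence every edge lies in a triangle. Walking from
a triangle `xwt` to any vertex `v` and applying the same fact at each step shows that `v` is
adjacent to `x` or `w`. Thus no vertex misses both ends of an edge: non-adjacency is transitive,
which is Mathlib's `SimpleGraph.IsCompleteMultipartite`.
-/

namespace SimpleGraph

variable {V : Type*} {G : SimpleGraph V}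

theorem adj_or_adj_of_paw_free (hfree : IsEmpty (paw ↪g G)) {a b c d : V}
    (hab : G.Adj a b) (hac : G.Adj a c) (hbc : G.Adj b c) (had : G.Adj a d) :
    G.Adj d b ∨ G.Adj d c := by
  by_contra! ⟨hdb, hdc⟩
  have hbd : b ≠ d := by rintro rfl; exact hdc hbc
  have hcd : c ≠ d := by rintro rfl; exact hdb hbc.symm
  have := hab.ne; have := hac.ne; have := hbc.ne; have := had.ne
  have := hab.symm; have := hac.symm; have := hbc.symm; have := had.symm
  have := mt G.adj_symm hdb; have := mt G.adj_symm hdc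
  suffices e : paw ↪g G from hfree.false e
  clear hfree
  refine ⟨⟨![a, b, c, d], fun i j hij => ?_⟩, fun {i j} => ?_⟩
  · fin_cases i <;> fin_cases j <;> simp_all
  · change G.Adj (![a, b, c, d] i) (![a, b, c, d] j) ↔ paw.Adj i j
    fin_cases i <;> fin_cases j <;> simp [paw, fromRel_adj, *]

def InTriangle (G : SimpleGraph V) (v : V) : Prop :=
  ∃ x y, G.Adj v x ∧ G.Adj v y ∧ G.Adj x y

namespace InTriangle

variable (hfree : IsEmpty (paw ↪g G))
include hfree

theorem of_adj {u v : V} (hu : G.InTriangle u) (huv : G.Adj u v) : G.InTriangle v := by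
  obtain ⟨x, y, hx, hy, hxy⟩ := hu
  rcases adj_or_adj_of_paw_free hfree hx hy hxy huv with hvx | hvy
  · exact ⟨u, x, huv.symm, hvx, hx⟩
  · exact ⟨u, y, huv.symm, hvy, hy⟩

theorem of_reachable {u v : V} (hu : G.InTriangle u) (huv : G.Reachable u v) :
    G.InTriangle v := by
  obtain ⟨p⟩ := huv
  induction p with
  | nil => exact hu
  | cons hux _ ih => exact ih (hu.of_adj hfree hux)

theorem exists_common_neighbor {u w : V} (hu : G.InTriangle u) (huw : G.Adj u w) :
    ∃ t, G.Adj u t ∧ G.Adj w t := by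
  obtain ⟨x, y, hx, hy, hxy⟩ := hu
  rcases adj_or_adj_of_paw_free hfree hx hy hxy huw with hwx | hwy
  · exact ⟨x, hx, hwx⟩
  · exact ⟨y, hy, hwy⟩

end InTriangle

theorem adj_or_adj_of_walk_of_paw_free (hfree : IsEmpty (paw ↪g G)) {x v : V} (p : G.Walk x v)
    {w t : V} (hxw : G.Adj x w) (hxt : G.Adj x t) (hwt : G.Adj w t) :
    G.Adj v x ∨ G.Adj v w := by
  induction p generalizing w t with
  | nil => exact .inr hxw
  | cons hxy _ ih =>
    have hyx := hxy.symm
    -- `y` closes a triangle with `x` and one of `w`, `t`; induct along that triangle.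
    rcases adj_or_adj_of_paw_free hfree hxw hxt hwt hxy with hyw | hyt
    · rcases ih hyx hyw hxw with hvy | hvx
      · exact adj_or_adj_of_paw_free hfree hyx hyw hxw hvy.symm
      · exact .inl hvx
    · rcases ih hyx hyt hxt with hvy | hvx
      · rcases adj_or_adj_of_paw_free hfree hyx hyt hxt hvy.symm with hvx | hvt
        · exact .inl hvx
        · exact (adj_or_adj_of_paw_free hfree hxt.symm hwt.symm hxw hvt.symm)
      · exact .inl hvx

theorem isCompleteMultipartite_of_paw_free (hconn : G.Connected) (hfree : IsEmpty (paw ↪g G))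
    {a : V} (ha : G.InTriangle a) : G.IsCompleteMultipartite := by
  refine ⟨fun u v w huv hvw huw => ?_⟩
  obtain ⟨t, hut, hwt⟩ := (ha.of_reachable hfree (hconn a u)).exists_common_neighbor hfree huw
  obtain ⟨p⟩ := hconn u v
  rcases adj_or_adj_of_walk_of_paw_free hfree p huw hut hwt with hvu | hvw'
  · exact huv hvu.symm
  · exact hvw hvw'

end SimpleGraph

theorem statement_0 {V : Type*} (G : SimpleGraph V) (hconn : G.Connected)
    (hfree : IsEmpty (paw ↪g G)) :
    IsCompleteMultipartite G ∨ G.CliqueFree 3 := by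
  classical
  by_cases htri : G.CliqueFree 3
  · exact .inr htri
  obtain ⟨s, hs⟩ := not_forall.mp htri
  obtain ⟨a, b, c, hab, hac, hbc, -⟩ := SimpleGraph.is3Clique_iff.mp (not_not.mp hs)
  have h := G.isCompleteMultipartite_of_paw_free hconn hfree ⟨b, c, hab, hac, hbc⟩
  exact .inl ⟨h.setoid, fun _ _ => not_not.symm⟩
end

section
/- If G is a finite graph that is a forest, G is 2P_2-free, and G has no independent set of size 3, then G is an induced subgraph of the path P_4. -/
set_option maxHeartbeats 1000000
set_option maxRecDepth 100000
set_option synthInstance.maxHeartbeats 1000000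
set_option synthInstance.maxSize 5000

/-- 2P₂: the disjoint union of two edges. -/
def twoP2 : SimpleGraph (Fin 4) :=
  SimpleGraph.fromRel (fun a b => (a.val, b.val) ∈ [(0,1),(2,3)])

namespace Statement3Aux

open SimpleGraph

def A5 (b01 b02 b03 b04 b12 b13 b14 b23 b24 b34 : Bool) (i j : Nat) : Bool :=
  match i, j with
  | 0,1 => b01 | 1,0 => b01
  | 0,2 => b02 | 2,0 => b02
  | 0,3 => b03 | 3,0 => b03
  | 0,4 => b04 | 4,0 => b04
  | 1,2 => b12 | 2,1 => b12
  | 1,3 => b13 | 3,1 => b13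
  | 1,4 => b14 | 4,1 => b14
  | 2,3 => b23 | 3,2 => b23
  | 2,4 => b24 | 4,2 => b24
  | 3,4 => b34 | 4,3 => b34
  | _,_ => false

def A4 (b01 b02 b03 b12 b13 b23 : Bool) (i j : Nat) : Bool :=
  match i, j with
  | 0,1 => b01 | 1,0 => b01
  | 0,2 => b02 | 2,0 => b02
  | 0,3 => b03 | 3,0 => b03
  | 1,2 => b12 | 2,1 => b12
  | 1,3 => b13 | 3,1 => b13
  | 2,3 => b23 | 3,2 => b23
  | _,_ => false

def A3 (b01 b02 b12 : Bool) (i j : Nat) : Bool :=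
  match i, j with
  | 0,1 => b01 | 1,0 => b01
  | 0,2 => b02 | 2,0 => b02
  | 1,2 => b12 | 2,1 => b12
  | _,_ => false

def dec4 (n i : Nat) : Nat := n / 4 ^ i % 4

def pN (x y : Nat) : Bool := (x + 1 == y) || (y + 1 == x)

theorem five_false : ∀ b01 b02 b03 b04 b12 b13 b14 b23 b24 b34 : Bool,
    (∀ k < 5, ∀ j < k, ∀ i < j,
      ¬ (A5 b01 b02 b03 b04 b12 b13 b14 b23 b24 b34 i j &&
         A5 b01 b02 b03 b04 b12 b13 b14 b23 b24 b34 j k &&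
         A5 b01 b02 b03 b04 b12 b13 b14 b23 b24 b34 i k) = true) →
    (∀ k < 5, ∀ j < k, ∀ i < j,
      (A5 b01 b02 b03 b04 b12 b13 b14 b23 b24 b34 i j ||
       A5 b01 b02 b03 b04 b12 b13 b14 b23 b24 b34 i k ||
       A5 b01 b02 b03 b04 b12 b13 b14 b23 b24 b34 j k) = true) →
    (∀ m < 5, ∀ j < m, ∀ k < 5, ∀ l < 5, 0 ≠ k → 0 ≠ l → j ≠ l → k ≠ m →
      ¬ (A5 b01 b02 b03 b04 b12 b13 b14 b23 b24 b34 0 j &&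
         A5 b01 b02 b03 b04 b12 b13 b14 b23 b24 b34 j k &&
         A5 b01 b02 b03 b04 b12 b13 b14 b23 b24 b34 k l &&
         A5 b01 b02 b03 b04 b12 b13 b14 b23 b24 b34 l m &&
         A5 b01 b02 b03 b04 b12 b13 b14 b23 b24 b34 m 0) = true) →
    False := by decide

theorem four_embed : ∀ b01 b02 b03 b12 b13 b23 : Bool,
    (∀ k < 4, ∀ j < k, ∀ i < j,
      ¬ (A4 b01 b02 b03 b12 b13 b23 i j && A4 b01 b02 b03 b12 b13 b23 j k &&
         A4 b01 b02 b03 b12 b13 b23 i k) = true) →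
    (∀ k < 4, ∀ j < k, ∀ i < j,
      (A4 b01 b02 b03 b12 b13 b23 i j || A4 b01 b02 b03 b12 b13 b23 i k ||
       A4 b01 b02 b03 b12 b13 b23 j k) = true) →
    (∀ j < 4, ∀ k < 4, ∀ l < 4, 0 ≠ k → j ≠ l →
      ¬ (A4 b01 b02 b03 b12 b13 b23 0 j && A4 b01 b02 b03 b12 b13 b23 j k &&
         A4 b01 b02 b03 b12 b13 b23 k l && A4 b01 b02 b03 b12 b13 b23 l 0) = true) →
    (∀ j < 4, ∀ k < 4, ∀ l < 4, 0 ≠ k → 0 ≠ l → j ≠ k → j ≠ l →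
      ¬ (A4 b01 b02 b03 b12 b13 b23 0 j && A4 b01 b02 b03 b12 b13 b23 k l &&
         !A4 b01 b02 b03 b12 b13 b23 0 k && !A4 b01 b02 b03 b12 b13 b23 0 l &&
         !A4 b01 b02 b03 b12 b13 b23 j k && !A4 b01 b02 b03 b12 b13 b23 j l) = true) →
    ∃ n < 256, (∀ j < 4, ∀ i < j, dec4 n i ≠ dec4 n j) ∧
      (∀ i < 4, ∀ j < 4,
        (A4 b01 b02 b03 b12 b13 b23 i j = true ↔ pN (dec4 n i) (dec4 n j) = true)) := by
  decide

theorem three_embed : ∀ b01 b02 b12 : Bool,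
    ((b01 || b02 || b12) = true) →
    (¬ (b01 && b02 && b12) = true) →
    ∃ n < 256, (∀ j < 3, ∀ i < j, dec4 n i ≠ dec4 n j) ∧
      (∀ i < 3, ∀ j < 3,
        (A3 b01 b02 b12 i j = true ↔ pN (dec4 n i) (dec4 n j) = true)) := by
  decide

theorem two_embed : ∀ b01 : Bool,
    ∃ n < 256, (∀ j < 2, ∀ i < j, dec4 n i ≠ dec4 n j) ∧
      (∀ i < 2, ∀ j < 2,
        (A3 b01 false false i j = true ↔ pN (dec4 n i) (dec4 n j) = true)) := by
  decide

lemma dec4_lt (n i : Nat) : dec4 n i < 4 := Nat.mod_lt _ (by norm_num)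

lemma pN_iff (x y : Fin 4) : pN x.val y.val = true ↔ (pathGraph 4).Adj x y := by
  rw [SimpleGraph.pathGraph_adj]
  simp [pN, Nat.succ_inj, or_comm]

variable {V : Type*} {G : SimpleGraph V}

lemma noK3 (h : G.IsAcyclic) {a b c : V} (hab : G.Adj a b) (hbc : G.Adj b c) (hca : G.Adj c a) : False := by
  have hac : a ≠ c := fun e => by subst e; exact G.irrefl hca
  exact h (Walk.cons hab (Walk.cons hbc (Walk.cons hca Walk.nil)))
    (by simp [Walk.isCycle_def, Walk.isTrail_def, hab.ne, hbc.ne, hca.ne, hac, Sym2.eq_iff,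
      hab.ne', hbc.ne', hca.ne', hac.symm])

lemma noC4 (h : G.IsAcyclic) {a b c d : V} (hac : a ≠ c) (hbd : b ≠ d)
    (hab : G.Adj a b) (hbc : G.Adj b c) (hcd : G.Adj c d) (hda : G.Adj d a) : False := by
  exact h (Walk.cons hab (Walk.cons hbc (Walk.cons hcd (Walk.cons hda Walk.nil))))
    (by simp [Walk.isCycle_def, Walk.isTrail_def, hab.ne, hbc.ne, hcd.ne, hda.ne, hac, hbd, Sym2.eq_iff,
      hab.ne', hbc.ne', hcd.ne', hda.ne', hac.symm, hbd.symm])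

lemma noC5 (h : G.IsAcyclic) {a b c d e : V} (hac : a ≠ c) (had : a ≠ d) (hbd : b ≠ d) (hbe : b ≠ e) (hce : c ≠ e)
    (hab : G.Adj a b) (hbc : G.Adj b c) (hcd : G.Adj c d) (hde : G.Adj d e) (hea : G.Adj e a) : False := by
  exact h (Walk.cons hab (Walk.cons hbc (Walk.cons hcd (Walk.cons hde (Walk.cons hea Walk.nil)))))
    (by simp [Walk.isCycle_def, Walk.isTrail_def, hab.ne, hbc.ne, hcd.ne, hde.ne, hea.ne, hac, had, hbd, hbe, hce, Sym2.eq_iff,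
      hab.ne', hbc.ne', hcd.ne', hde.ne', hea.ne', hac.symm, had.symm, hbd.symm, hbe.symm, hce.symm])

lemma no2K2 (h : IsEmpty (twoP2 ↪g G)) {a b c d : V} (hac : a ≠ c) (had : a ≠ d) (hbc : b ≠ c) (hbd : b ≠ d)
    (hab : G.Adj a b) (hcd : G.Adj c d) (nac : ¬G.Adj a c) (nad : ¬G.Adj a d)
    (nbc : ¬G.Adj b c) (nbd : ¬G.Adj b d) : False := by
  refine h.elim ⟨⟨![a,b,c,d], ?_⟩, ?_⟩
  · intro i j hij
    fin_cases i <;> fin_cases j <;>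
      simp_all [hab.ne, hab.ne', hcd.ne, hcd.ne', hac, had, hbc, hbd, hac.symm, had.symm,
        hbc.symm, hbd.symm]
  · intro i j
    have nca : ¬G.Adj c a := fun h' => nac h'.symm
    have nda : ¬G.Adj d a := fun h' => nad h'.symm
    have ncb : ¬G.Adj c b := fun h' => nbc h'.symm
    have ndb : ¬G.Adj d b := fun h' => nbd h'.symm
    show G.Adj (![a,b,c,d] i) (![a,b,c,d] j) ↔ twoP2.Adj i j
    fin_cases i <;> fin_cases j <;>
      simp [twoP2, SimpleGraph.fromRel_adj, hab, hcd, hab.symm, hcd.symm, nac, nad, nbc, nbd,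
        nca, nda, ncb, ndb, G.irrefl] <;> decide

end Statement3Aux


open Statement3Aux SimpleGraph in
theorem statement_3 {V : Type*} [Fintype V] (G : SimpleGraph V)
    (hforest : G.IsAcyclic) (h2P2free : IsEmpty (twoP2 ↪g G))
    (hindep : Gᶜ.CliqueFree 3) :
    Nonempty (G ↪g SimpleGraph.pathGraph 4) := by
  classical
  have indep3 : ∀ {a b c : V}, a ≠ b → a ≠ c → b ≠ c →
      ¬G.Adj a b → ¬G.Adj a c → ¬G.Adj b c → False := by
    intro a b c hab hac hbc nab nac nbc
    refine hindep {a,b,c} (SimpleGraph.is3Clique_iff.mpr ⟨a, b, c, ?_, ?_, ?_, rfl⟩) <;>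
      simp [SimpleGraph.compl_adj, hab, hac, hbc, nab, nac, nbc]
  have hcard : Fintype.card V ≤ 4 := by
    by_contra hlt
    push_neg at hlt
    obtain ⟨f⟩ : Nonempty (Fin 5 ↪ V) :=
      Function.Embedding.nonempty_of_card_le (by simpa using Nat.succ_le_of_lt hlt)
    have fne : ∀ {i j : Nat} (hi : i < 5) (hj : j < 5), i ≠ j → f ⟨i, hi⟩ ≠ f ⟨j, hj⟩ := by
      intro i j hi hj hije h
      exact hije (by simpa using f.injective h)
    set d : Fin 5 → Fin 5 → Bool := fun i j => decide (G.Adj (f i) (f j)) with hd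
    have hA : ∀ i j (hi : i < 5) (hj : j < 5),
        (A5 (d 0 1) (d 0 2) (d 0 3) (d 0 4) (d 1 2) (d 1 3) (d 1 4) (d 2 3) (d 2 4) (d 3 4)
          i j = true) ↔ G.Adj (f ⟨i, hi⟩) (f ⟨j, hj⟩) := by
      intro i j hi hj
      interval_cases i <;> interval_cases j <;>
        simp only [A5, hd, decide_eq_true_eq, Bool.false_eq_true, false_iff] <;>
        first
          | exact Iff.rfl
          | exact G.adj_comm _ _
          | exact G.irrefl
    refine five_false (d 0 1) (d 0 2) (d 0 3) (d 0 4) (d 1 2) (d 1 3) (d 1 4) (d 2 3) (d 2 4) (d 3 4) ?_ ?_ ?_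
    · -- no triangle
      intro k hk j hj i hi hpat
      rw [Bool.and_eq_true, Bool.and_eq_true] at hpat
      obtain ⟨⟨h1, h2⟩, h3⟩ := hpat
      rw [hA i j (by omega) (by omega)] at h1
      rw [hA j k (by omega) (by omega)] at h2
      rw [hA i k (by omega) (by omega)] at h3
      exact noK3 hforest h1 h2 h3.symm
    · -- no independent triple
      intro k hk j hj i hi
      by_contra hne
      simp only [Bool.or_eq_true, not_or] at hne
      obtain ⟨⟨n1, n2⟩, n3⟩ := hne
      rw [hA i j (by omega) (by omega)] at n1
      rw [hA i k (by omega) (by omega)] at n2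
      rw [hA j k (by omega) (by omega)] at n3
      exact indep3 (fne (by omega) (by omega) (by omega))
        (fne (by omega) (by omega) (by omega))
        (fne (by omega) (by omega) (by omega)) n1 n2 n3
    · -- no C5
      intro m hm j hj k hk l hl h0k h0l hjl hkm hpat
      rw [Bool.and_eq_true, Bool.and_eq_true, Bool.and_eq_true, Bool.and_eq_true] at hpat
      obtain ⟨⟨⟨⟨h1, h2⟩, h3⟩, h4⟩, h5⟩ := hpat
      rw [hA 0 j (by omega) (by omega)] at h1
      rw [hA j k (by omega) (by omega)] at h2
      rw [hA k l (by omega) (by omega)] at h3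
      rw [hA l m (by omega) (by omega)] at h4
      rw [hA m 0 (by omega) (by omega)] at h5
      exact noC5 hforest (fne (by omega) (by omega) h0k) (fne (by omega) (by omega) h0l)
        (fne (by omega) (by omega) hjl) (fne (by omega) (by omega) (by omega))
        (fne (by omega) (by omega) hkm) h1 h2 h3 h4 h5
  -- now split on the cardinality
  have hc : Fintype.card V ≤ 1 ∨ Fintype.card V = 2 ∨ Fintype.card V = 3 ∨
      Fintype.card V = 4 := by omega
  rcases hc with hc | hc | hc | hc
  · -- at most one vertex
    have : Subsingleton V := Fintype.card_le_one_iff_subsingleton.mp hc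
    refine ⟨⟨⟨fun _ => 0, fun {x y} _ => Subsingleton.elim x y⟩, ?_⟩⟩
    intro a b
    constructor
    · intro h
      exact absurd h (SimpleGraph.irrefl _)
    · intro h
      have : a = b := Subsingleton.elim a b
      subst this
      exact absurd h (SimpleGraph.irrefl _)
  · -- two vertices
    have e : V ≃ Fin 2 := Fintype.equivFinOfCardEq hc
    set v : Fin 2 → V := fun i => e.symm i with hv
    set d : Fin 2 → Fin 2 → Bool := fun i j => decide (G.Adj (v i) (v j)) with hd
    have hA : ∀ i j (hi : i < 2) (hj : j < 2),
        (A3 (d 0 1) false false i j = true) ↔ G.Adj (v ⟨i, hi⟩) (v ⟨j, hj⟩) := by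
      intro i j hi hj
      interval_cases i <;> interval_cases j <;>
        simp only [A3, hd, decide_eq_true_eq, Bool.false_eq_true, false_iff] <;>
        first
          | exact Iff.rfl
          | exact G.adj_comm _ _
          | exact G.irrefl
    obtain ⟨n, hn, hinj, hiff⟩ := two_embed (d 0 1)
    refine ⟨⟨⟨fun x => ⟨dec4 n (e x).val, dec4_lt n _⟩, ?_⟩, ?_⟩⟩
    · intro x y hxy
      have hvv : dec4 n (e x).val = dec4 n (e y).val := by simpa using hxy
      by_contra hne
      have hexy : (e x).val ≠ (e y).val := by
        intro h
        exact hne (e.injective (Fin.val_injective h))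
      rcases Nat.lt_or_ge (e x).val (e y).val with hlt | hge
      · exact hinj (e y).val (e y).isLt (e x).val hlt hvv
      · exact hinj (e x).val (e x).isLt (e y).val (by omega) hvv.symm
    · intro a b
      have h1 : pN (dec4 n (e a).val) (dec4 n (e b).val) = true ↔ G.Adj a b := by
        rw [← hiff (e a).val (e a).isLt (e b).val (e b).isLt]
        rw [hA (e a).val (e b).val (e a).isLt (e b).isLt]
        simp [hv]
      exact (pN_iff ⟨dec4 n (e a).val, dec4_lt n _⟩ ⟨dec4 n (e b).val, dec4_lt n _⟩).symm.trans h1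
  · -- three vertices
    have e : V ≃ Fin 3 := Fintype.equivFinOfCardEq hc
    set v : Fin 3 → V := fun i => e.symm i with hv
    have vne : ∀ {i j : Fin 3}, i ≠ j → v i ≠ v j := fun h => e.symm.injective.ne h
    set d : Fin 3 → Fin 3 → Bool := fun i j => decide (G.Adj (v i) (v j)) with hd
    have hA : ∀ i j (hi : i < 3) (hj : j < 3),
        (A3 (d 0 1) (d 0 2) (d 1 2) i j = true) ↔ G.Adj (v ⟨i, hi⟩) (v ⟨j, hj⟩) := by
      intro i j hi hj
      interval_cases i <;> interval_cases j <;>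
        simp only [A3, hd, decide_eq_true_eq, Bool.false_eq_true, false_iff] <;>
        first
          | exact Iff.rfl
          | exact G.adj_comm _ _
          | exact G.irrefl
    have hyp1 : ((d 0 1) || (d 0 2) || (d 1 2)) = true := by
      by_contra hne
      simp only [Bool.or_eq_true, not_or, hd, decide_eq_true_eq] at hne
      obtain ⟨⟨n1, n2⟩, n3⟩ := hne
      exact indep3 (vne (by decide)) (vne (by decide)) (vne (by decide)) n1 n2 n3
    have hyp2 : ¬ ((d 0 1) && (d 0 2) && (d 1 2)) = true := by
      intro hpat
      simp only [Bool.and_eq_true, hd, decide_eq_true_eq] at hpat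
      obtain ⟨⟨h1, h2⟩, h3⟩ := hpat
      exact noK3 hforest h1 h3 h2.symm
    obtain ⟨n, hn, hinj, hiff⟩ := three_embed (d 0 1) (d 0 2) (d 1 2) hyp1 hyp2
    refine ⟨⟨⟨fun x => ⟨dec4 n (e x).val, dec4_lt n _⟩, ?_⟩, ?_⟩⟩
    · intro x y hxy
      have hvv : dec4 n (e x).val = dec4 n (e y).val := by simpa using hxy
      by_contra hne
      have hexy : (e x).val ≠ (e y).val := by
        intro h
        exact hne (e.injective (Fin.val_injective h))
      rcases Nat.lt_or_ge (e x).val (e y).val with hlt | hge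
      · exact hinj (e y).val (e y).isLt (e x).val hlt hvv
      · exact hinj (e x).val (e x).isLt (e y).val (by omega) hvv.symm
    · intro a b
      have h1 : pN (dec4 n (e a).val) (dec4 n (e b).val) = true ↔ G.Adj a b := by
        rw [← hiff (e a).val (e a).isLt (e b).val (e b).isLt]
        rw [hA (e a).val (e b).val (e a).isLt (e b).isLt]
        simp [hv]
      exact (pN_iff ⟨dec4 n (e a).val, dec4_lt n _⟩ ⟨dec4 n (e b).val, dec4_lt n _⟩).symm.trans h1
  · -- four vertices
    have e : V ≃ Fin 4 := Fintype.equivFinOfCardEq hc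
    set v : Fin 4 → V := fun i => e.symm i with hv
    have fne : ∀ {i j : Nat} (hi : i < 4) (hj : j < 4), i ≠ j → v ⟨i, hi⟩ ≠ v ⟨j, hj⟩ := by
      intro i j hi hj hije h
      exact hije (by simpa using e.symm.injective h)
    set d : Fin 4 → Fin 4 → Bool := fun i j => decide (G.Adj (v i) (v j)) with hd
    have hA : ∀ i j (hi : i < 4) (hj : j < 4),
        (A4 (d 0 1) (d 0 2) (d 0 3) (d 1 2) (d 1 3) (d 2 3) i j = true)
          ↔ G.Adj (v ⟨i, hi⟩) (v ⟨j, hj⟩) := by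
      intro i j hi hj
      interval_cases i <;> interval_cases j <;>
        simp only [A4, hd, decide_eq_true_eq, Bool.false_eq_true, false_iff] <;>
        first
          | exact Iff.rfl
          | exact G.adj_comm _ _
          | exact G.irrefl
    have hypK3 : ∀ k < 4, ∀ j < k, ∀ i < j,
      ¬ (A4 (d 0 1) (d 0 2) (d 0 3) (d 1 2) (d 1 3) (d 2 3) i j && A4 (d 0 1) (d 0 2) (d 0 3) (d 1 2) (d 1 3) (d 2 3) j k &&
         A4 (d 0 1) (d 0 2) (d 0 3) (d 1 2) (d 1 3) (d 2 3) i k) = true := by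
      intro k hk j hj i hi hpat
      rw [Bool.and_eq_true, Bool.and_eq_true] at hpat
      obtain ⟨⟨h1, h2⟩, h3⟩ := hpat
      rw [hA i j (by omega) (by omega)] at h1
      rw [hA j k (by omega) (by omega)] at h2
      rw [hA i k (by omega) (by omega)] at h3
      exact noK3 hforest h1 h2 h3.symm
    have hypAl : ∀ k < 4, ∀ j < k, ∀ i < j,
      (A4 (d 0 1) (d 0 2) (d 0 3) (d 1 2) (d 1 3) (d 2 3) i j || A4 (d 0 1) (d 0 2) (d 0 3) (d 1 2) (d 1 3) (d 2 3) i k ||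
       A4 (d 0 1) (d 0 2) (d 0 3) (d 1 2) (d 1 3) (d 2 3) j k) = true := by
      intro k hk j hj i hi
      by_contra hne
      simp only [Bool.or_eq_true, not_or] at hne
      obtain ⟨⟨n1, n2⟩, n3⟩ := hne
      rw [hA i j (by omega) (by omega)] at n1
      rw [hA i k (by omega) (by omega)] at n2
      rw [hA j k (by omega) (by omega)] at n3
      exact indep3 (fne (by omega) (by omega) (by omega))
        (fne (by omega) (by omega) (by omega))
        (fne (by omega) (by omega) (by omega)) n1 n2 n3
    have hypC4 : ∀ j < 4, ∀ k < 4, ∀ l < 4, 0 ≠ k → j ≠ l →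
      ¬ (A4 (d 0 1) (d 0 2) (d 0 3) (d 1 2) (d 1 3) (d 2 3) 0 j && A4 (d 0 1) (d 0 2) (d 0 3) (d 1 2) (d 1 3) (d 2 3) j k &&
         A4 (d 0 1) (d 0 2) (d 0 3) (d 1 2) (d 1 3) (d 2 3) k l && A4 (d 0 1) (d 0 2) (d 0 3) (d 1 2) (d 1 3) (d 2 3) l 0) = true := by
      intro j hj k hk l hl h0k hjl hpat
      rw [Bool.and_eq_true, Bool.and_eq_true, Bool.and_eq_true] at hpat
      obtain ⟨⟨⟨h1, h2⟩, h3⟩, h4⟩ := hpat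
      rw [hA 0 j (by omega) (by omega)] at h1
      rw [hA j k (by omega) (by omega)] at h2
      rw [hA k l (by omega) (by omega)] at h3
      rw [hA l 0 (by omega) (by omega)] at h4
      exact noC4 hforest (fne (by omega) (by omega) h0k) (fne (by omega) (by omega) hjl)
        h1 h2 h3 h4
    have hyp2K2 : ∀ j < 4, ∀ k < 4, ∀ l < 4, 0 ≠ k → 0 ≠ l → j ≠ k → j ≠ l →
      ¬ (A4 (d 0 1) (d 0 2) (d 0 3) (d 1 2) (d 1 3) (d 2 3) 0 j && A4 (d 0 1) (d 0 2) (d 0 3) (d 1 2) (d 1 3) (d 2 3) k l &&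
         !A4 (d 0 1) (d 0 2) (d 0 3) (d 1 2) (d 1 3) (d 2 3) 0 k && !A4 (d 0 1) (d 0 2) (d 0 3) (d 1 2) (d 1 3) (d 2 3) 0 l &&
         !A4 (d 0 1) (d 0 2) (d 0 3) (d 1 2) (d 1 3) (d 2 3) j k && !A4 (d 0 1) (d 0 2) (d 0 3) (d 1 2) (d 1 3) (d 2 3) j l) = true := by
      intro j hj k hk l hl h0k h0l hjk hjl hpat
      rw [Bool.and_eq_true, Bool.and_eq_true, Bool.and_eq_true, Bool.and_eq_true,
        Bool.and_eq_true] at hpat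
      obtain ⟨⟨⟨⟨⟨h1, h2⟩, h3⟩, h4⟩, h5⟩, h6⟩ := hpat
      rw [Bool.not_eq_true'] at h3 h4 h5 h6
      rw [hA 0 j (by omega) (by omega)] at h1
      rw [hA k l (by omega) (by omega)] at h2
      have n3 : ¬ G.Adj (v ⟨0, by omega⟩) (v ⟨k, by omega⟩) := by
        rw [← hA 0 k (by omega) (by omega), h3]; simp
      have n4 : ¬ G.Adj (v ⟨0, by omega⟩) (v ⟨l, by omega⟩) := by
        rw [← hA 0 l (by omega) (by omega), h4]; simp
      have n5 : ¬ G.Adj (v ⟨j, by omega⟩) (v ⟨k, by omega⟩) := by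
        rw [← hA j k (by omega) (by omega), h5]; simp
      have n6 : ¬ G.Adj (v ⟨j, by omega⟩) (v ⟨l, by omega⟩) := by
        rw [← hA j l (by omega) (by omega), h6]; simp
      exact no2K2 h2P2free (fne (by omega) (by omega) h0k) (fne (by omega) (by omega) h0l)
        (fne (by omega) (by omega) hjk) (fne (by omega) (by omega) hjl)
        h1 h2 n3 n4 n5 n6
    obtain ⟨n, hn, hinj, hiff⟩ :=
      four_embed (d 0 1) (d 0 2) (d 0 3) (d 1 2) (d 1 3) (d 2 3) hypK3 hypAl hypC4 hyp2K2
    refine ⟨⟨⟨fun x => ⟨dec4 n (e x).val, dec4_lt n _⟩, ?_⟩, ?_⟩⟩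
    · intro x y hxy
      have hvv : dec4 n (e x).val = dec4 n (e y).val := by simpa using hxy
      by_contra hne
      have hexy : (e x).val ≠ (e y).val := by
        intro h
        exact hne (e.injective (Fin.val_injective h))
      rcases Nat.lt_or_ge (e x).val (e y).val with hlt | hge
      · exact hinj (e y).val (e y).isLt (e x).val hlt hvv
      · exact hinj (e x).val (e x).isLt (e y).val (by omega) hvv.symm
    · intro a b
      have h1 : pN (dec4 n (e a).val) (dec4 n (e b).val) = true ↔ G.Adj a b := by
        rw [← hiff (e a).val (e a).isLt (e b).val (e b).isLt]
        rw [hA (e a).val (e b).val (e a).isLt (e b).isLt]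
        simp [hv]
      exact (pN_iff ⟨dec4 n (e a).val, dec4_lt n _⟩ ⟨dec4 n (e b).val, dec4_lt n _⟩).symm.trans h1
end

section
/- The only graphs H (up to isomorphism) such that both H and its complement are disjoint unions of paths and subdivided claws are the six graphs P_1, 2P_1, P_1+P_2, P_2, P_3 and P_4; equivalently, if H and its complement both belong to the class S, then H is an induced subgraph of P_4. -/
/-!
Both `H` and `Hᶜ` are forests, and a forest on `n` vertices has fewer than `n` edges, so
`n.choose 2 = e(H) + e(Hᶜ) ≤ 2 (n - 1)`, which forces `n ≤ 4`. A forest contains no triangle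
and no square, and a finite check shows that a graph on at most four vertices such that neither
it nor its complement contains a triangle or a square is an induced subgraph of `P₄`.
-/

/-- The class 𝒮: every connected component is a path or a subdivided claw.
Equivalently (for finite graphs): the graph is a forest of maximum degree at
most 3 in which no two distinct vertices of degree 3 lie in the same component. -/
def inClassS {V : Type*} (G : SimpleGraph V) : Prop :=
  G.IsAcyclic ∧ (∀ v, (G.neighborSet v).ncard ≤ 3) ∧
    ∀ u v, (G.neighborSet u).ncard = 3 → (G.neighborSet v).ncard = 3 →
      G.Reachable u v → u = v

open Finset

namespace SimpleGraph

variable {V W : Type*} {G : SimpleGraph V}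

lemma IsAcyclic.card_edgeFinset_lt [Fintype V] [Nonempty V] [DecidableRel G.Adj]
    (hG : G.IsAcyclic) : #G.edgeFinset < Fintype.card V := by
  classical
  obtain ⟨T, hGT, -, hT⟩ := connected_top.exists_isTree_le_of_le_of_isAcyclic le_top hG
  rw [← hT.card_edgeFinset]
  exact Nat.lt_succ_of_le (card_le_card (edgeFinset_mono hGT))

lemma card_edgeFinset_add_card_edgeFinset_compl [Fintype V] [DecidableEq V]
    [DecidableRel G.Adj] :
    #G.edgeFinset + #Gᶜ.edgeFinset = (Fintype.card V).choose 2 := by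
  rw [← card_union_of_disjoint (disjoint_edgeFinset.mpr disjoint_compl_right), ← edgeFinset_sup,
    ← card_edgeFinset_top_eq_card_choose_two]
  congr! 2
  exact sup_compl_eq_top

theorem card_le_four_of_isAcyclic_of_isAcyclic_compl [Fintype V] (hG : G.IsAcyclic)
    (hGc : Gᶜ.IsAcyclic) : Fintype.card V ≤ 4 := by
  classical
  by_contra! h
  have : Nonempty V := Fintype.card_pos_iff.mp (by omega)
  have hsum := G.card_edgeFinset_add_card_edgeFinset_compl
  have := hG.card_edgeFinset_lt
  have := hGc.card_edgeFinset_lt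
  have hchoose : (Fintype.card V).choose 2 * 2 = Fintype.card V * (Fintype.card V - 1) := by
    rw [Nat.choose_two_right, Nat.div_two_mul_two_of_even (Nat.even_mul_pred_self _)]
  have : 5 * (Fintype.card V - 1) ≤ Fintype.card V * (Fintype.card V - 1) :=
    Nat.mul_le_mul_right _ h
  omega

def TriangleSquareFree (G : SimpleGraph V) : Prop :=
  (∀ a b c, G.Adj a b → G.Adj b c → ¬ G.Adj c a) ∧
  ∀ a b c d, a ≠ c → b ≠ d → G.Adj a b → G.Adj b c → G.Adj c d → ¬ G.Adj d a

instance [Fintype V] [DecidableEq V] [DecidableRel G.Adj] : Decidable G.TriangleSquareFree := by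
  unfold TriangleSquareFree; infer_instance

-- `a` is a neighbour of `b` lying on a path from `b` through `c`, so in a forest it is `c`.
lemma IsAcyclic.triangleSquareFree (hG : G.IsAcyclic) : G.TriangleSquareFree := by
  refine ⟨fun a b c hab hbc hca => ?_, fun a b c d hac hbd hab hbc hcd hda => ?_⟩
  · have hp : (Walk.cons hbc (Walk.cons hca Walk.nil)).IsPath := by
      simp [hbc.ne, hca.ne, hab.ne']
    exact hca.ne (hG.eq_snd_of_adj_start hp hab.symm (by simp)).symm
  · have hp : (Walk.cons hbc (Walk.cons hcd (Walk.cons hda Walk.nil))).IsPath := by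
      simp [hbc.ne, hcd.ne, hda.ne, hab.ne', hbd, hac.symm]
    exact hac (hG.eq_snd_of_adj_start hp hab.symm (by simp))

lemma TriangleSquareFree.of_embedding {G' : SimpleGraph W} (f : G ↪g G')
    (h : G'.TriangleSquareFree) : G.TriangleSquareFree := by
  refine ⟨fun a b c hab hbc hca => ?_, fun a b c d hac hbd hab hbc hcd hda => ?_⟩
  · exact h.1 (f a) (f b) (f c) (f.map_adj_iff.mpr hab) (f.map_adj_iff.mpr hbc)
      (f.map_adj_iff.mpr hca)
  · exact h.2 (f a) (f b) (f c) (f d) (f.injective.ne hac) (f.injective.ne hbd)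
      (f.map_adj_iff.mpr hab) (f.map_adj_iff.mpr hbc) (f.map_adj_iff.mpr hcd)
      (f.map_adj_iff.mpr hda)

instance (n : ℕ) : DecidableRel (pathGraph n).Adj := fun _ _ => decidable_of_iff' _ pathGraph_adj

-- Only the six edges above the diagonal are coded, so that `decide` enumerates `2⁶` graphs
-- rather than `2¹⁶` relations.
def fin4Graph (b : Fin 6 → Bool) : SimpleGraph (Fin 4) :=
  fromRel fun i j => ![![false, b 0, b 1, b 2], ![false, false, b 3, b 4],
    ![false, false, false, b 5], ![false, false, false, false]] i j

instance (b : Fin 6 → Bool) : DecidableRel (fin4Graph b).Adj :=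
  fun _ _ => decidable_of_iff' _ (fromRel_adj _ _ _)

lemma exists_fin4Graph_eq (G : SimpleGraph (Fin 4)) : ∃ b, fin4Graph b = G := by
  classical
  refine ⟨![G.Adj 0 1, G.Adj 0 2, G.Adj 0 3, G.Adj 1 2, G.Adj 1 3, G.Adj 2 3], ?_⟩
  ext i j
  fin_cases i <;> fin_cases j <;> simp [fin4Graph] <;> exact G.adj_comm _ _

theorem exists_pathGraph_four_of_triangleSquareFree_fin4Graph :
    ∀ n : Fin 5, ∀ b : Fin 6 → Bool,
      ((fin4Graph b).comap (Fin.castLE n.is_le)).TriangleSquareFree →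
      ((fin4Graph b).comap (Fin.castLE n.is_le))ᶜ.TriangleSquareFree →
      ∃ g : Fin n → Fin 4, Function.Injective g ∧ ∀ i j,
        ((fin4Graph b).comap (Fin.castLE n.is_le)).Adj i j ↔ (pathGraph 4).Adj (g i) (g j) := by
  decide +kernel

theorem nonempty_embedding_pathGraph_four [Fintype V] (hn : Fintype.card V ≤ 4)
    (hG : G.TriangleSquareFree) (hGc : Gᶜ.TriangleSquareFree) :
    Nonempty (G ↪g pathGraph 4) := by
  classical
  let e := Fintype.equivFin V
  let f : V ↪ Fin 4 := e.toEmbedding.trans (Fin.castLEEmb hn)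
  obtain ⟨b, hb⟩ := exists_fin4Graph_eq (G.map f)
  let φ : G ≃g (fin4Graph b).comap (Fin.castLE hn) :=
    { toEquiv := e
      map_rel_iff' := by simp [hb, f] }
  obtain ⟨g, hg, hadj⟩ := exists_pathGraph_four_of_triangleSquareFree_fin4Graph
    ⟨_, Nat.lt_succ_of_le hn⟩ b (hG.of_embedding φ.symm.toEmbedding)
    (hGc.of_embedding (Embedding.complEquiv φ.symm.toEmbedding))
  exact ⟨φ.toEmbedding.trans ⟨⟨g, hg⟩, (hadj _ _).symm⟩⟩

end SimpleGraph

open SimpleGraph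

theorem statement_4 {V : Type*} [Fintype V] (H : SimpleGraph V)
    (h1 : inClassS H) (h2 : inClassS Hᶜ) :
    Nonempty (H ↪g SimpleGraph.pathGraph 4) :=
  nonempty_embedding_pathGraph_four (card_le_four_of_isAcyclic_of_isAcyclic_compl h1.1 h2.1)
    h1.1.triangleSquareFree h2.1.triangleSquareFree
end

section
/- Let G be a connected triangle-free graph containing no induced copy of P_1 + S_{1,1,2}. If G contains an induced cycle C of odd length k ≥ 7, then G is equal to C (i.e., G has no vertices outside C). -/
/-!
Suppose a vertex lies off the induced odd cycle `C = c₀ ⋯ c_{k-1}`. By connectivity some vertex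
`u` off `C` has a neighbour on `C`. Since `G` is triangle-free, no two neighbours of `u` on `C`
are consecutive, and since `k` is odd there is then a neighbour `c_j` of `u` with `c_{j+2}` and
`c_{j+4}` not adjacent to `u`. The claw at `c_j` with leaves `c_{j-1}`, `u`, `c_{j+1}`, extended by
the edge `c_{j+1} c_{j+2}`, is an induced `S_{1,1,2}`, and for `k ≥ 7` the vertex `c_{j+4}` has no
neighbour in it: an induced `P₁ + S_{1,1,2}`.
-/

/-- The cycle on `k` vertices. -/
def cyc (k : ℕ) : SimpleGraph (Fin k) :=
  SimpleGraph.fromRel (fun i j => j.val = (i.val + 1) % k)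

/-- P₁ + S_{1,1,2}: an isolated vertex (0) together with the tree on
{1,2,3,4,5} with centre 1 adjacent to 2, 3, 4 and 4 adjacent to 5. -/
def P1S112 : SimpleGraph (Fin 6) :=
  SimpleGraph.fromRel (fun a b => (a.val, b.val) ∈ [(1,2),(1,3),(1,4),(4,5)])

open SimpleGraph Fin.NatCast Fin.CommRing

theorem exists_mem_add_two_nsmul_notMem_of_odd {A : Type*} [AddMonoid A] {N : Set A} {g : A}
    {k : ℕ} (hk : Odd k) (hkg : k • g = 0) (hN : ∀ x ∈ N, x + g ∉ N) {x₀ : A} (hx₀ : x₀ ∈ N) :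
    ∃ x ∈ N, x + 2 • g ∉ N ∧ x + 4 • g ∉ N := by
  by_contra! hstep
  -- Steps of `2 • g` and `4 • g` from `x₀` cannot jump over both `x₀ + (k ± 1) • g`,
  -- the two `g`-neighbours of `x₀`.
  have hwalk : ∀ n, x₀ + (2 * n) • g ∈ N ∨ x₀ + (2 * (n + 1)) • g ∈ N := by
    intro n
    induction n with
    | zero => simpa using Or.inl hx₀
    | succ n ih =>
      refine ih.elim (fun h => ?_) Or.inl
      by_cases h2 : x₀ + (2 * n) • g + 2 • g ∈ N
      · rw [add_assoc, ← add_nsmul] at h2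
        exact Or.inl h2
      · have h4 := hstep _ h h2
        rw [add_assoc, ← add_nsmul] at h4
        exact Or.inr (by convert h4 using 3; ring)
  obtain ⟨m, rfl⟩ := hk
  rcases hwalk m with h | h
  · refine hN _ h ?_
    rwa [add_assoc, ← succ_nsmul, hkg, add_zero]
  · refine hN _ hx₀ ?_
    rwa [show 2 * (m + 1) = (2 * m + 1) + 1 by ring, succ_nsmul, hkg, zero_add] at h

theorem cyc_eq_cycleGraph (k : ℕ) : cyc k = cycleGraph k := by
  ext i j
  match k with
  | 0 => exact i.elim0
  | 1 => simp [cyc, Subsingleton.elim i j]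
  | n + 2 =>
    have hsucc : ∀ i j : Fin (n + 2), j.val = (i.val + 1) % (n + 2) ↔ j = i + 1 := by
      intro i j
      rw [Fin.ext_iff, Fin.val_add, Fin.val_one]
    rw [cyc, fromRel_adj, cycleGraph_adj, sub_eq_iff_eq_add', sub_eq_iff_eq_add', hsucc, hsucc,
      or_comm, and_iff_right_of_imp]
    rintro (rfl | rfl) <;> simp

theorem cyc_adj_add_one {k : ℕ} [NeZero k] (hk : 2 ≤ k) (j : Fin k) : (cyc k).Adj j (j + 1) := by
  obtain ⟨n, rfl⟩ : ∃ n, k = n + 2 := ⟨k - 2, by omega⟩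
  rw [cyc_eq_cycleGraph, cycleGraph_adj, add_sub_cancel_left]
  exact Or.inr rfl

theorem cyc_adj_add_natCast_iff {k : ℕ} [NeZero k] (p : Fin k) {a b : ℕ} (ha : a + 1 < k)
    (hb : b + 1 < k) : (cyc k).Adj (p + a) (p + b) ↔ a = b + 1 ∨ b = a + 1 := by
  obtain ⟨n, rfl⟩ : ∃ n, k = n + 2 := ⟨k - 2, by omega⟩
  have cast_inj : ∀ {x y : ℕ}, x < n + 2 → y < n + 2 → ((x : Fin (n + 2)) = y ↔ x = y) := by
    intro x y hx hy
    rw [Fin.ext_iff, Fin.val_natCast, Fin.val_natCast, Nat.mod_eq_of_lt hx, Nat.mod_eq_of_lt hy]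
  rw [cyc_eq_cycleGraph, cycleGraph_adj, add_sub_add_left_eq_sub, add_sub_add_left_eq_sub,
    sub_eq_iff_eq_add', sub_eq_iff_eq_add', ← Nat.cast_add_one, ← Nat.cast_add_one,
    cast_inj (by omega) (by omega), cast_inj (by omega) (by omega)]

theorem nonempty_P1S112_embedding {V : Type*} {G : SimpleGraph V} {z c a b d e : V}
    (hab : a ≠ b) (hca : G.Adj c a) (hcb : G.Adj c b) (hcd : G.Adj c d) (hde : G.Adj d e)
    (nab : ¬G.Adj a b) (nad : ¬G.Adj a d) (nae : ¬G.Adj a e) (nbd : ¬G.Adj b d)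
    (nbe : ¬G.Adj b e) (nce : ¬G.Adj c e) (nzc : ¬G.Adj z c) (nza : ¬G.Adj z a)
    (nzb : ¬G.Adj z b) (nzd : ¬G.Adj z d) (nze : ¬G.Adj z e) :
    Nonempty (P1S112 ↪g G) := by
  have hadj : ∀ x y, G.Adj (![z, c, a, b, d, e] x) (![z, c, a, b, d, e] y) ↔ P1S112.Adj x y := by
    intro x y
    fin_cases x <;> fin_cases y <;> simp [P1S112, G.adj_comm, *]
  refine ⟨⟨⟨![z, c, a, b, d, e], fun x y hxy => ?_⟩, hadj _ _⟩⟩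
  fin_cases x <;> fin_cases y <;> simp_all [G.adj_comm]

theorem nonempty_P1S112_embedding_of_cyc {V : Type*} {G : SimpleGraph V} {k : ℕ} [NeZero k]
    (hk : 7 ≤ k) (f : cyc k ↪g G) {u : V} (hu : u ∉ Set.range f) {j : Fin k}
    (hj : G.Adj u (f j)) (hjm : ¬G.Adj u (f (j - 1))) (hj1 : ¬G.Adj u (f (j + 1)))
    (hj2 : ¬G.Adj u (f (j + 2))) (hj4 : ¬G.Adj u (f (j + 4))) : Nonempty (P1S112 ↪g G) := by
  obtain ⟨p, rfl⟩ : ∃ p, j = p + 1 := ⟨j - 1, (sub_add_cancel j 1).symm⟩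
  have hf : ∀ a b : ℕ, a ≤ 5 → b ≤ 5 →
      (G.Adj (f (p + a)) (f (p + b)) ↔ a = b + 1 ∨ b = a + 1) := fun a b ha hb => by
    rw [f.map_adj_iff, cyc_adj_add_natCast_iff p (by omega) (by omega)]
  have e0 : p + (0 : ℕ) = p + 1 - 1 := by simp
  have e1 : p + (1 : ℕ) = p + 1 := by simp
  have e2 : p + (2 : ℕ) = p + 1 + 1 := by push_cast; ring
  have e3 : p + (3 : ℕ) = p + 1 + 2 := by push_cast; ring
  have e5 : p + (5 : ℕ) = p + 1 + 4 := by push_cast; ring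
  rw [← e0] at hjm; rw [← e1] at hj; rw [← e2] at hj1; rw [← e3] at hj2; rw [← e5] at hj4
  refine nonempty_P1S112_embedding (z := f (p + (5 : ℕ))) (c := f (p + (1 : ℕ)))
    (a := f (p + (0 : ℕ))) (b := u) (d := f (p + (2 : ℕ))) (e := f (p + (3 : ℕ)))
    (fun h => hu ⟨_, h⟩) ?_ hj.symm ?_ ?_ (fun h => hjm h.symm) ?_ ?_ hj1 hj2 ?_ ?_ ?_
    (fun h => hj4 h.symm) ?_ ?_
  all_goals rw [hf _ _ (by norm_num) (by norm_num)]; omega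

theorem statement_5 {V : Type*} (G : SimpleGraph V) (k : ℕ) (hk : 7 ≤ k)
    (hodd : Odd k) (hconn : G.Connected) (htri : G.CliqueFree 3)
    (hfree : IsEmpty (P1S112 ↪g G)) (f : cyc k ↪g G) :
    Function.Surjective f := by
  have : NeZero k := ⟨by omega⟩
  by_contra hsurj
  obtain ⟨v, hv⟩ := not_forall.1 hsurj
  obtain ⟨⟨⟨w, u⟩, hwu⟩, -, ⟨i, rfl⟩, hu⟩ :=
    (hconn (f 0) v).some.exists_boundary_dart (Set.range f) ⟨0, rfl⟩ hv
  set N := f ⁻¹' G.neighborSet u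
  have hN : ∀ j ∈ N, j + 1 ∉ N := fun j hj hj1 =>
    have hadj := f.map_adj_iff.2 (cyc_adj_add_one (by omega) j)
    isIndepSet_neighborSet_of_triangleFree G htri u hj hj1 hadj.ne hadj
  obtain ⟨j, hj, hj2, hj4⟩ := exists_mem_add_two_nsmul_notMem_of_odd hodd
    (by simp) hN (x₀ := i) hwu.symm
  exact hfree.false (nonempty_P1S112_embedding_of_cyc hk f hu hj
    (fun h => hN _ h (by simpa using hj)) (hN j hj) (by simpa [N] using hj2)
    (by simpa [N] using hj4)).some
end

section
/- Let G be a (K_3, P_1+S_{1,1,2})-free graph containing an induced 5-cycle C = v_1⋯v_5 v_1, and suppose x is a vertex outside C with no neighbour on C. Then x is adjacent to every vertex y ∉ V(C) that has at least one neighbour on C. -/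
set_option maxHeartbeats 1000000


theorem statement_7 {V : Type*} (G : SimpleGraph V) (htri : G.CliqueFree 3)
    (hfree : IsEmpty (P1S112 ↪g G)) (f : cyc 5 ↪g G)
    (x : V) (hx : x ∉ Set.range f) (hxC : ∀ i, ¬ G.Adj x (f i)) :
    ∀ y, y ∉ Set.range f → (∃ i, G.Adj y (f i)) → G.Adj x y := by
  classical
  intro y hy ⟨i, hi⟩
  by_contra hxy
  -- triangle-free helper
  have tri : ∀ a b c : V, G.Adj a b → G.Adj b c → G.Adj a c → False := by
    intro a b c hab hbc hac
    exact htri {a, b, c} (SimpleGraph.is3Clique_triple_iff.mpr ⟨hab, hac, hbc⟩)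
  -- cycle adjacency facts
  have c1 : ∀ j : Fin 5, (cyc 5).Adj j (j + 1) := by
    simp only [cyc, SimpleGraph.fromRel_adj]; decide
  have c1' : ∀ j : Fin 5, (cyc 5).Adj (j - 1) j := by
    simp only [cyc, SimpleGraph.fromRel_adj]; decide
  have c2 : ∀ j : Fin 5, ¬ (cyc 5).Adj j (j + 2) := by
    simp only [cyc, SimpleGraph.fromRel_adj]; decide
  have c3 : ∀ j : Fin 5, ¬ (cyc 5).Adj (j - 1) (j + 1) := by
    simp only [cyc, SimpleGraph.fromRel_adj]; decide
  have c4 : ∀ j : Fin 5, ¬ (cyc 5).Adj (j - 1) (j + 2) := by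
    simp only [cyc, SimpleGraph.fromRel_adj]; decide
  have fc1 : ∀ j : Fin 5, G.Adj (f j) (f (j + 1)) := fun j => f.map_adj_iff.mpr (c1 j)
  have fc1' : ∀ j : Fin 5, G.Adj (f (j - 1)) (f j) := fun j => f.map_adj_iff.mpr (c1' j)
  -- find j with y ~ f j and ¬ y ~ f (j+2)
  obtain ⟨j, hj1, hj2⟩ : ∃ j : Fin 5, G.Adj y (f j) ∧ ¬ G.Adj y (f (j + 2)) := by
    by_cases h : G.Adj y (f (i + 2))
    · refine ⟨i + 2, h, fun h4 => ?_⟩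
      have e : ∀ i : Fin 5, i + 4 + 1 = i := by decide
      have hadj : G.Adj (f (i + 4)) (f i) := by
        have := fc1 (i + 4); rwa [e i] at this
      have e2 : ∀ i : Fin 5, i + 2 + 2 = i + 4 := by decide
      rw [e2 i] at h4
      exact tri y (f (i + 4)) (f i) h4 hadj hi
    · exact ⟨i, hi, h⟩
  -- non-adjacency facts, in both orientations
  have n34 : ¬ G.Adj y (f (j + 1)) := fun h => tri y (f j) (f (j + 1)) hj1 (fc1 j) h
  have n43 : ¬ G.Adj (f (j + 1)) y := fun h => n34 h.symm
  have n23 : ¬ G.Adj (f (j - 1)) y := fun h => tri (f (j - 1)) y (f j) h hj1 (fc1' j)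
  have n32 : ¬ G.Adj y (f (j - 1)) := fun h => n23 h.symm
  have n24 : ¬ G.Adj (f (j - 1)) (f (j + 1)) := fun h => c3 j (f.map_adj_iff.mp h)
  have n42 : ¬ G.Adj (f (j + 1)) (f (j - 1)) := fun h => n24 h.symm
  have n25 : ¬ G.Adj (f (j - 1)) (f (j + 2)) := fun h => c4 j (f.map_adj_iff.mp h)
  have n52 : ¬ G.Adj (f (j + 2)) (f (j - 1)) := fun h => n25 h.symm
  have n15 : ¬ G.Adj (f j) (f (j + 2)) := fun h => c2 j (f.map_adj_iff.mp h)
  have n51 : ¬ G.Adj (f (j + 2)) (f j) := fun h => n15 h.symm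
  have n53 : ¬ G.Adj (f (j + 2)) y := fun h => hj2 h.symm
  have hyx : ¬ G.Adj y x := fun h => hxy h.symm
  have h0k : ∀ k : Fin 5, ¬ G.Adj (f k) x := fun k h => hxC k h.symm
  have h01 := hxC j
  have h02 := hxC (j - 1)
  have h04 := hxC (j + 1)
  have h05 := hxC (j + 2)
  have h10 := h0k j
  have h20 := h0k (j - 1)
  have h40 := h0k (j + 1)
  have h50 := h0k (j + 2)
  -- positive adjacencies, both orientations
  have h13 := hj1.symm
  have h21 := fc1' j
  have h12 := h21.symm
  have h14 := fc1 j
  have h41 := h14.symm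
  have h45 := fc1 (j + 1)
  have h54 := h45.symm
  have e15 : ∀ j : Fin 5, j + 1 + 1 = j + 2 := by decide
  rw [e15 j] at h45 h54
  -- distinctness
  have hxf1 : x ≠ f j := fun h => hx ⟨j, h.symm⟩
  have hxf2 : x ≠ f (j - 1) := fun h => hx ⟨j - 1, h.symm⟩
  have hxf4 : x ≠ f (j + 1) := fun h => hx ⟨j + 1, h.symm⟩
  have hxf5 : x ≠ f (j + 2) := fun h => hx ⟨j + 2, h.symm⟩
  have hyf1 : y ≠ f j := fun h => hy ⟨j, h.symm⟩
  have hyf2 : y ≠ f (j - 1) := fun h => hy ⟨j - 1, h.symm⟩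
  have hyf4 : y ≠ f (j + 1) := fun h => hy ⟨j + 1, h.symm⟩
  have hyf5 : y ≠ f (j + 2) := fun h => hy ⟨j + 2, h.symm⟩
  have hxy' : x ≠ y := fun h => hxC j (h ▸ hj1)
  have d1 : ∀ j : Fin 5, j ≠ j - 1 ∧ j ≠ j + 1 ∧ j ≠ j + 2 ∧ (j - 1) ≠ j + 1 ∧
      (j - 1) ≠ j + 2 ∧ (j + 1) ≠ j + 2 := by decide
  obtain ⟨e1, e2, e3, e4, e5, e6⟩ := d1 j
  have ne12 : f j ≠ f (j - 1) := fun h => e1 (f.injective h)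
  have ne14 : f j ≠ f (j + 1) := fun h => e2 (f.injective h)
  have ne15 : f j ≠ f (j + 2) := fun h => e3 (f.injective h)
  have ne24 : f (j - 1) ≠ f (j + 1) := fun h => e4 (f.injective h)
  have ne25 : f (j - 1) ≠ f (j + 2) := fun h => e5 (f.injective h)
  have ne45 : f (j + 1) ≠ f (j + 2) := fun h => e6 (f.injective h)
  -- val-level distinctness (for Fin.ext_iff forms)
  have d1v : ∀ j : Fin 5, ((j : ℕ) ≠ ↑(j - 1)) ∧ ((j : ℕ) ≠ ↑(j + 1)) ∧ ((j : ℕ) ≠ ↑(j + 2))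
      ∧ ((↑(j - 1) : ℕ) ≠ ↑(j + 1)) ∧ ((↑(j - 1) : ℕ) ≠ ↑(j + 2))
      ∧ ((↑(j + 1) : ℕ) ≠ ↑(j + 2)) := by decide
  obtain ⟨w1, w2, w3, w4, w5, w6⟩ := d1v j
  -- cyc-level adjacency facts instantiated at j
  have cc1 : (cyc 5).Adj j (j + 1) := c1 j
  have cc2 : (cyc 5).Adj (j + 1) j := (c1 j).symm
  have cc3 : (cyc 5).Adj (j - 1) j := c1' j
  have cc4 : (cyc 5).Adj j (j - 1) := (c1' j).symm
  have cc5 : (cyc 5).Adj (j + 1) (j + 2) := by rw [← e15 j]; exact c1 (j + 1)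
  have cc6 : (cyc 5).Adj (j + 2) (j + 1) := cc5.symm
  have cc7 : ¬ (cyc 5).Adj j (j + 2) := c2 j
  have cc8 : ¬ (cyc 5).Adj (j + 2) j := fun h => c2 j h.symm
  have cc9 : ¬ (cyc 5).Adj (j - 1) (j + 1) := c3 j
  have cc10 : ¬ (cyc 5).Adj (j + 1) (j - 1) := fun h => c3 j h.symm
  have cc11 : ¬ (cyc 5).Adj (j - 1) (j + 2) := c4 j
  have cc12 : ¬ (cyc 5).Adj (j + 2) (j - 1) := fun h => c4 j h.symm
  -- build the forbidden embedding
  set g : Fin 6 → V := ![x, f j, f (j - 1), y, f (j + 1), f (j + 2)] with hg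
  have emb : P1S112 ↪g G := by
    refine ⟨⟨g, ?_⟩, ?_⟩
    · intro a b
      fin_cases a <;> fin_cases b <;> norm_num [g, Fin.ext_iff] <;>
        first
          | assumption
          | decide
          | (apply Ne.symm; assumption)
    · intro a b
      fin_cases a <;> fin_cases b <;>
        simp only [g, P1S112, SimpleGraph.fromRel_adj, Matrix.cons_val_zero,
          Matrix.cons_val_one, Matrix.head_cons, Matrix.cons_val_two, Matrix.tail_cons,
          Matrix.cons_val_three, Matrix.cons_val_four, Matrix.cons_val_succ] <;>
        norm_num [Fin.ext_iff] <;>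
        first
          | assumption
          | decide
          | exact G.irrefl
          | (apply Ne.symm; assumption)
  exact hfree.false emb
end

section
/- Let G be a (K_3, P_1+S_{1,1,2})-free graph with an induced 5-cycle v_1⋯v_5 v_1. Let V_1 be the set of vertices outside the cycle adjacent to exactly v_2 and v_5 among the cycle vertices, and V_2 the set of vertices outside the cycle adjacent to exactly v_1 and v_3. If |V_1| ≥ 2 and |V_2| ≥ 2, then every vertex of V_1 is adjacent to every vertex of V_2. -/
namespace SimpleGraph

variable {W V : Type*} {H : SimpleGraph W} {G : SimpleGraph V}

/-- A map that preserves and reflects adjacency can only identify vertices with the same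
neighbourhood, so injectivity needs checking only on such twins. -/
def Embedding.ofAdjIff (φ : W → V) (hadj : ∀ i j, G.Adj (φ i) (φ j) ↔ H.Adj i j)
    (htwin : ∀ i j, i ≠ j → (∀ k, H.Adj i k ↔ H.Adj j k) → φ i ≠ φ j) : H ↪g G where
  toFun := φ
  inj' i j hij := by
    by_contra hne
    refine htwin i j hne (fun k => ?_) hij
    rw [← hadj, ← hadj, hij]
  map_rel_iff' := hadj _ _

end SimpleGraph

open SimpleGraph

lemma cyc_adj_iff (k : ℕ) (i j : Fin k) :
    (cyc k).Adj i j ↔ i ≠ j ∧ (j.val = (i.val + 1) % k ∨ i.val = (j.val + 1) % k) :=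
  fromRel_adj ..

lemma P1S112_adj_iff (i j : Fin 6) :
    P1S112.Adj i j ↔ i ≠ j ∧ ((i.val, j.val) ∈ [(1,2),(1,3),(1,4),(4,5)] ∨
        (j.val, i.val) ∈ [(1,2),(1,3),(1,4),(4,5)]) :=
  fromRel_adj ..

instance : DecidableRel P1S112.Adj := fun i j => decidable_of_iff' _ (P1S112_adj_iff i j)

lemma P1S112_twin_pair : ∀ i j : Fin 6, i ≠ j → (∀ k, P1S112.Adj i k ↔ P1S112.Adj j k) →
    i = 2 ∧ j = 3 ∨ i = 3 ∧ j = 2 := by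
  decide

section

variable {V : Type*} {G : SimpleGraph V}

lemma nonempty_P1S112_embedding_of_adj {x₀ x₁ x₂ x₃ x₄ x₅ : V} (h23 : x₂ ≠ x₃)
    (h12 : G.Adj x₁ x₂) (h13 : G.Adj x₁ x₃) (h14 : G.Adj x₁ x₄) (h45 : G.Adj x₄ x₅)
    (h01 : ¬ G.Adj x₀ x₁) (h02 : ¬ G.Adj x₀ x₂) (h03 : ¬ G.Adj x₀ x₃) (h04 : ¬ G.Adj x₀ x₄)
    (h05 : ¬ G.Adj x₀ x₅) (h15 : ¬ G.Adj x₁ x₅) (h23' : ¬ G.Adj x₂ x₃) (h24 : ¬ G.Adj x₂ x₄)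
    (h25 : ¬ G.Adj x₂ x₅) (h34 : ¬ G.Adj x₃ x₄) (h35 : ¬ G.Adj x₃ x₅) :
    Nonempty (P1S112 ↪g G) := by
  refine ⟨Embedding.ofAdjIff ![x₀, x₁, x₂, x₃, x₄, x₅] (fun i j => ?_) (fun i j hij htw => ?_)⟩
  · fin_cases i <;> fin_cases j <;> simp_all [P1S112_adj_iff, G.adj_comm]
  · rcases P1S112_twin_pair i j hij htw with ⟨rfl, rfl⟩ | ⟨rfl, rfl⟩
    exacts [h23, h23.symm]

lemma adj_of_cycle_attachments (htri : G.CliqueFree 3) (hfree : IsEmpty (P1S112 ↪g G))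
    (f : cyc 5 ↪g G) {a a' b : V} (hne : a ≠ a') (ha'f : a' ≠ f 0)
    (ha : ∀ i, G.Adj a (f i) ↔ i = 1 ∨ i = 4) (ha' : ∀ i, G.Adj a' (f i) ↔ i = 1 ∨ i = 4)
    (hb : ∀ i, G.Adj b (f i) ↔ i = 0 ∨ i = 2) : G.Adj a b := by
  by_contra hab
  have hf : ∀ i j, G.Adj (f i) (f j) ↔ (cyc 5).Adj i j := fun _ _ => f.map_adj_iff
  have hfa : ∀ i, G.Adj (f i) a ↔ i = 1 ∨ i = 4 := fun i => G.adj_comm _ _ |>.trans (ha i)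
  have hfa' : ∀ i, G.Adj (f i) a' ↔ i = 1 ∨ i = 4 := fun i => G.adj_comm _ _ |>.trans (ha' i)
  have hfb : ∀ i, G.Adj (f i) b ↔ i = 0 ∨ i = 2 := fun i => G.adj_comm _ _ |>.trans (hb i)
  have haa' : ¬ G.Adj a a' :=
    isIndepSet_neighborSet_of_triangleFree G htri (f 1) ((hfa 1).2 (by simp))
      ((hfa' 1).2 (by simp)) hne
  by_cases hba' : G.Adj b a'
  · refine (nonempty_P1S112_embedding_of_adj (x₀ := a) (x₁ := b) (x₂ := f 0) (x₃ := a')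
      (x₄ := f 2) (x₅ := f 3) ha'f.symm ?_ hba' ?_ ?_ hab ?_ haa' ?_ ?_ ?_ ?_ ?_ ?_ ?_ ?_).elim
      hfree.false
    all_goals simp [ha, ha', hb, hfa', hf, cyc_adj_iff]
  · refine (nonempty_P1S112_embedding_of_adj (x₀ := f 3) (x₁ := f 1) (x₂ := a) (x₃ := a')
      (x₄ := f 0) (x₅ := b) hne ?_ ?_ ?_ ?_ ?_ ?_ ?_ ?_ ?_ ?_ haa' ?_ hab ?_ (fun h => hba' h.symm)).elim
      hfree.false
    all_goals simp [ha, ha', hfa, hfa', hfb, hf, cyc_adj_iff]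

end

/- The cycle vertices are v₁ = f 0, …, v₅ = f 4.  `V1` consists of the vertices
outside the cycle adjacent to exactly v₂ (= f 1) and v₅ (= f 4), and `V2` of
those adjacent to exactly v₁ (= f 0) and v₃ (= f 2). -/
theorem statement_8_general {V : Type*} (G : SimpleGraph V) (htri : G.CliqueFree 3)
    (hfree : IsEmpty (P1S112 ↪g G)) (f : cyc 5 ↪g G) (V1 V2 : Set V)
    (hV1 : V1 = {v | v ∉ Set.range f ∧ ∀ i, G.Adj v (f i) ↔ (i = 1 ∨ i = 4)})
    (hV2 : V2 = {v | v ∉ Set.range f ∧ ∀ i, G.Adj v (f i) ↔ (i = 0 ∨ i = 2)})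
    (h1 : V1.Nontrivial) :
    ∀ a ∈ V1, ∀ b ∈ V2, G.Adj a b := by
  subst hV1 hV2
  rintro a ⟨-, ha⟩ b ⟨-, hb⟩
  obtain ⟨a', ⟨ha'f, ha'⟩, ha'a⟩ := h1.exists_ne a
  exact adj_of_cycle_attachments htri hfree f ha'a.symm (fun h => ha'f ⟨0, h.symm⟩) ha ha' hb

theorem statement_8 {V : Type*} (G : SimpleGraph V) (htri : G.CliqueFree 3)
    (hfree : IsEmpty (P1S112 ↪g G)) (f : cyc 5 ↪g G) (V1 V2 : Set V)
    (hV1 : V1 = {v | v ∉ Set.range f ∧ ∀ i, G.Adj v (f i) ↔ (i = 1 ∨ i = 4)})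
    (hV2 : V2 = {v | v ∉ Set.range f ∧ ∀ i, G.Adj v (f i) ↔ (i = 0 ∨ i = 2)})
    (h1 : V1.Nontrivial) (h2 : V2.Nontrivial) :
    ∀ a ∈ V1, ∀ b ∈ V2, G.Adj a b :=
  statement_8_general G htri hfree f V1 V2 hV1 hV2 h1
end

section
/- Let G be a (K_3, P_1+S_{1,1,2})-free graph with an induced 5-cycle v_1⋯v_5 v_1. Let W_1 be the set of vertices outside the cycle whose only neighbour on the cycle is v_1, and W_3 the set of vertices outside the cycle whose only neighbour on the cycle is v_3. Then every vertex of W_1 is adjacent to every vertex of W_3. -/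
/-
If a ∈ W₁ and b ∈ W₃ were non-adjacent, then b together with the tree centred at v₁ with
leaves v₂, a and the path v₁ v₅ v₄ would be an induced P₁ + S_{1,1,2}: b sees only v₃ on the
cycle, a sees only v₁, and the remaining pairs are non-consecutive on the 5-cycle.
-/

namespace SimpleGraph

variable {V W : Type*} {G : SimpleGraph V}

lemma adj_iff_adj_of_apply_eq {H : SimpleGraph W} {x : W → V}
    (hx : ∀ i j, G.Adj (x i) (x j) ↔ H.Adj i j) {i j : W} (hij : x i = x j) (k : W) :
    H.Adj i k ↔ H.Adj j k := by
  rw [← hx, ← hx, hij]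

lemma P1S112_eq_or_leaves_of_forall_adj_iff {i j : Fin 6} (h : ∀ k, P1S112.Adj i k ↔ P1S112.Adj j k) :
    i = j ∨ i = 2 ∧ j = 3 ∨ i = 3 ∧ j = 2 := by
  revert i j
  simp only [P1S112, fromRel_adj]
  decide

lemma nonempty_P1S112_embedding {x₀ x₁ x₂ x₃ x₄ x₅ : V}
    (h₁₂ : G.Adj x₁ x₂) (h₁₃ : G.Adj x₁ x₃) (h₁₄ : G.Adj x₁ x₄) (h₄₅ : G.Adj x₄ x₅)
    (h₀₁ : ¬G.Adj x₀ x₁) (h₀₂ : ¬G.Adj x₀ x₂) (h₀₃ : ¬G.Adj x₀ x₃) (h₀₄ : ¬G.Adj x₀ x₄)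
    (h₀₅ : ¬G.Adj x₀ x₅) (h₁₅ : ¬G.Adj x₁ x₅) (h₂₃ : ¬G.Adj x₂ x₃) (h₂₄ : ¬G.Adj x₂ x₄)
    (h₂₅ : ¬G.Adj x₂ x₅) (h₃₄ : ¬G.Adj x₃ x₄) (h₃₅ : ¬G.Adj x₃ x₅) (hx₂₃ : x₂ ≠ x₃) :
    Nonempty (P1S112 ↪g G) := by
  set x : Fin 6 → V := ![x₀, x₁, x₂, x₃, x₄, x₅]
  have hx : ∀ i j, G.Adj (x i) (x j) ↔ P1S112.Adj i j := by
    intro i j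
    fin_cases i <;> fin_cases j <;>
      simp [x, P1S112, fromRel_adj] <;>
      first | exact G.irrefl | assumption | exact Adj.symm ‹_› | exact fun h => ‹¬G.Adj _ _› h.symm
  -- Vertices with equal images have equal neighbourhoods, and only 2 and 3 are twins in `P1S112`.
  refine ⟨⟨⟨x, fun i j hij => ?_⟩, hx _ _⟩⟩
  obtain h | ⟨rfl, rfl⟩ | ⟨rfl, rfl⟩ := P1S112_eq_or_leaves_of_forall_adj_iff (adj_iff_adj_of_apply_eq hx hij)
  · exact h
  · exact absurd hij hx₂₃
  · exact absurd hij.symm hx₂₃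

theorem adj_of_unique_neighbour_on_five_cycle (hfree : IsEmpty (P1S112 ↪g G)) {f : cyc 5 ↪g G}
    {a b : V} (haf : a ∉ Set.range ⇑f) (ha : ∀ i, G.Adj a (f i) ↔ i = 0)
    (hb : ∀ i, G.Adj b (f i) ↔ i = 2) : G.Adj a b := by
  have ha' (i : Fin 5) : G.Adj (f i) a ↔ i = 0 := G.adj_comm _ _ |>.trans (ha i)
  by_contra hab
  refine not_isEmpty_iff.2 (nonempty_P1S112_embedding (x₀ := b) (x₁ := f 0) (x₂ := f 1) (x₃ := a)
    (x₄ := f 4) (x₅ := f 3) ?_ ?_ ?_ ?_ ?_ ?_ (fun h => hab h.symm) ?_ ?_ ?_ ?_ ?_ ?_ ?_ ?_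
    fun h => haf ⟨1, h⟩) hfree
  all_goals simp only [f.map_adj_iff, ha, ha', hb] <;> simp [cyc]

end SimpleGraph

/- The cycle vertices are v₁ = f 0, …, v₅ = f 4. -/
theorem statement_9_general {V : Type*} (G : SimpleGraph V)
    (hfree : IsEmpty (P1S112 ↪g G)) (f : cyc 5 ↪g G) (W1 W3 : Set V)
    (hW1 : W1 = {v | v ∉ Set.range f ∧ ∀ i, G.Adj v (f i) ↔ i = 0})
    (hW3 : W3 = {v | v ∉ Set.range f ∧ ∀ i, G.Adj v (f i) ↔ i = 2}) :
    ∀ a ∈ W1, ∀ b ∈ W3, G.Adj a b := by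
  subst hW1 hW3
  rintro a ⟨haf, ha⟩ b ⟨-, hb⟩
  exact G.adj_of_unique_neighbour_on_five_cycle hfree haf ha hb

theorem statement_9 {V : Type*} (G : SimpleGraph V) (htri : G.CliqueFree 3)
    (hfree : IsEmpty (P1S112 ↪g G)) (f : cyc 5 ↪g G) (W1 W3 : Set V)
    (hW1 : W1 = {v | v ∉ Set.range f ∧ ∀ i, G.Adj v (f i) ↔ i = 0})
    (hW3 : W3 = {v | v ∉ Set.range f ∧ ∀ i, G.Adj v (f i) ↔ i = 2}) :
    ∀ a ∈ W1, ∀ b ∈ W3, G.Adj a b :=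
  statement_9_general G hfree f W1 W3 hW1 hW3
end

section
/- Let G be a (K_3, K_{1,3}+2P_1)-free graph, let x be a vertex with three neighbours x_1, x_2, x_3, and let N_2 = V(G) \ N[x]. Then the set of vertices of N_2 having no neighbour in {x_1, x_2, x_3} has at most 2 elements. -/
/-- K_{1,3} + 2P₁: a claw (0 adjacent to 1, 2, 3) plus two isolated vertices. -/
def K13plus2P1 : SimpleGraph (Fin 6) :=
  SimpleGraph.fromRel (fun a b => (a.val, b.val) ∈ [(0,1),(0,2),(0,3)])

/-!
The vertices of `N₂` with no neighbour among `x₁, x₂, x₃` are pairwise adjacent: two non-adjacent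
ones `u, v`, together with the claw centred at `x` on `x₁, x₂, x₃` (an induced claw because `G` is
triangle-free), would induce `K_{1,3} + 2P₁`. A clique of a triangle-free graph has at most two
vertices.
-/

namespace SimpleGraph

variable {V : Type*} {G : SimpleGraph V}

theorem IsClique.encard_lt_of_cliqueFree {n : ℕ} {s : Set V} (hG : G.CliqueFree n)
    (hs : G.IsClique s) : s.encard < n := by
  by_contra! h
  obtain ⟨t, hts, ht⟩ := Set.exists_subset_encard_eq h
  lift t to Finset V using Set.finite_of_encard_eq_coe ht
  exact hG t ⟨hs.subset hts, by simpa using ht⟩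

theorem K13plus2P1_isIndContained (htri : G.CliqueFree 3) {x x1 x2 x3 u v : V}
    (h1 : G.Adj x x1) (h2 : G.Adj x x2) (h3 : G.Adj x x3)
    (h12 : x1 ≠ x2) (h13 : x1 ≠ x3) (h23 : x2 ≠ x3)
    (hux : u ≠ x) (hxu : ¬G.Adj x u) (hu1 : ¬G.Adj u x1) (hu2 : ¬G.Adj u x2)
    (hu3 : ¬G.Adj u x3)
    (hvx : v ≠ x) (hxv : ¬G.Adj x v) (hv1 : ¬G.Adj v x1) (hv2 : ¬G.Adj v x2)
    (hv3 : ¬G.Adj v x3)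
    (huv : u ≠ v) (hnuv : ¬G.Adj u v) : K13plus2P1 ⊴ G := by
  have hind := isIndepSet_neighborSet_of_triangleFree G htri x
  have n12 : ¬G.Adj x1 x2 := hind h1 h2 h12
  have n13 : ¬G.Adj x1 x3 := hind h1 h3 h13
  have n23 : ¬G.Adj x2 x3 := hind h2 h3 h23
  -- a coincidence of two of the six vertices contradicts one of the (non-)adjacencies
  have hinj : Function.Injective ![x, x1, x2, x3, u, v] := by
    intro a b hab
    fin_cases a <;> fin_cases b <;> simp_all
  have hadj : ∀ a b, G.Adj (![x, x1, x2, x3, u, v] a) (![x, x1, x2, x3, u, v] b) ↔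
      K13plus2P1.Adj a b := by
    intro a b
    fin_cases a <;> fin_cases b <;> simp [K13plus2P1] <;>
      first | assumption | (rw [G.adj_comm]; assumption)
  exact ⟨⟨⟨_, hinj⟩, hadj _ _⟩⟩

theorem isClique_setOf_not_adj_of_not_K13plus2P1_isIndContained (htri : G.CliqueFree 3)
    (hfree : ¬K13plus2P1 ⊴ G) {x x1 x2 x3 : V}
    (h1 : G.Adj x x1) (h2 : G.Adj x x2) (h3 : G.Adj x x3)
    (h12 : x1 ≠ x2) (h13 : x1 ≠ x3) (h23 : x2 ≠ x3) :
    G.IsClique {y | y ≠ x ∧ ¬G.Adj x y ∧ ¬G.Adj y x1 ∧ ¬G.Adj y x2 ∧ ¬G.Adj y x3} := by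
  rintro u ⟨hux, hxu, hu1, hu2, hu3⟩ v ⟨hvx, hxv, hv1, hv2, hv3⟩ huv
  by_contra hnuv
  exact hfree <| K13plus2P1_isIndContained htri h1 h2 h3 h12 h13 h23
    hux hxu hu1 hu2 hu3 hvx hxv hv1 hv2 hv3 huv hnuv

end SimpleGraph

theorem statement_10 {V : Type*} (G : SimpleGraph V) (htri : G.CliqueFree 3)
    (hfree : IsEmpty (K13plus2P1 ↪g G)) (x x1 x2 x3 : V)
    (h1 : G.Adj x x1) (h2 : G.Adj x x2) (h3 : G.Adj x x3)
    (h12 : x1 ≠ x2) (h13 : x1 ≠ x3) (h23 : x2 ≠ x3) :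
    ({y | y ≠ x ∧ ¬ G.Adj x y ∧ ¬ G.Adj y x1 ∧ ¬ G.Adj y x2 ∧
      ¬ G.Adj y x3}).encard ≤ 2 := by
  have hclique := SimpleGraph.isClique_setOf_not_adj_of_not_K13plus2P1_isIndContained htri
    (not_nonempty_iff.mpr hfree) h1 h2 h3 h12 h13 h23
  exact Order.le_of_lt_add_one (hclique.encard_lt_of_cliqueFree htri)
end

section
/- Let G be a (K_3, K_{1,3}+2P_1)-free graph and let x be a vertex of G. Suppose A and B are disjoint independent sets of vertices in V(G) \ N[x] such that some vertex x_1 ∈ N(x) is adjacent to every vertex of A and to no vertex of B, and suppose |A| ≥ 8 and |B| ≥ 8. Then every vertex of A is adjacent to every vertex of B, i.e., G[A ∪ B] is complete bipartite. -/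
theorem Set.one_lt_encard_sdiff {α : Type*} {s t : Set α} {k : ℕ} (ht : (s ∩ t).encard ≤ k)
    (hs : k + 2 ≤ s.encard) : 1 < (s \ t).encard := by
  by_contra! h
  have : s.encard ≤ 1 + k := by
    rw [← Set.encard_sdiff_add_encard_inter s t]
    gcongr
  have : ((k + 2 : ℕ) : ℕ∞) ≤ (1 + k : ℕ) := by push_cast; order
  norm_cast at this
  omega

namespace SimpleGraph
variable {V : Type*} {G : SimpleGraph V}

theorem K13plus2P1_isIndContained_s11 {c l₁ l₂ l₃ p₁ p₂ : V}
    (hI : G.IsIndepSet {l₁, l₂, l₃, p₁, p₂})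
    (hl₁₂ : l₁ ≠ l₂) (hl₁₃ : l₁ ≠ l₃) (hl₂₃ : l₂ ≠ l₃) (hp : p₁ ≠ p₂)
    (hc₁ : G.Adj c l₁) (hc₂ : G.Adj c l₂) (hc₃ : G.Adj c l₃)
    (hcp₁ : ¬G.Adj c p₁) (hcp₂ : ¬G.Adj c p₂) :
    K13plus2P1 ⊴ G := by
  have hnadj {u v : V} (hu : u ∈ ({l₁, l₂, l₃, p₁, p₂} : Set V))
      (hv : v ∈ ({l₁, l₂, l₃, p₁, p₂} : Set V)) : ¬G.Adj u v :=
    fun huv => hI hu hv huv.ne huv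
  have hne₁ : c ≠ p₁ := by rintro rfl; exact hnadj (by simp) (by simp) hc₁
  have hne₂ : c ≠ p₂ := by rintro rfl; exact hnadj (by simp) (by simp) hc₁
  have hlp {l : V} (hl : G.Adj c l) : l ≠ p₁ ∧ l ≠ p₂ :=
    ⟨by rintro rfl; exact hcp₁ hl, by rintro rfl; exact hcp₂ hl⟩
  refine ⟨⟨⟨![c, l₁, l₂, l₃, p₁, p₂], ?_⟩, ?_⟩⟩
  · simp [Function.Injective, Fin.forall_fin_succ]
    grind [hlp hc₁, hlp hc₂, hlp hc₃, hc₁.ne, hc₂.ne, hc₃.ne]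
  · simp [Fin.forall_fin_succ, K13plus2P1]
    grind [G.adj_symm]

theorem encard_inter_neighborSet_le_two (hfree : IsEmpty (K13plus2P1 ↪g G)) {S : Set V}
    (hS : G.IsIndepSet S) {c p₁ p₂ : V} (hp₁ : p₁ ∈ S) (hp₂ : p₂ ∈ S) (hp : p₁ ≠ p₂)
    (hcp₁ : ¬G.Adj c p₁) (hcp₂ : ¬G.Adj c p₂) :
    (S ∩ G.neighborSet c).encard ≤ 2 := by
  by_contra! h
  obtain ⟨T, hTS, hT⟩ := Set.exists_subset_encard_eq (Order.add_one_le_of_lt h)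
  obtain ⟨l₁, l₂, l₃, hl₁₂, hl₁₃, hl₂₃, rfl⟩ := Set.encard_eq_three.1 hT
  simp only [Set.insert_subset_iff, Set.singleton_subset_iff, Set.mem_inter_iff,
    mem_neighborSet] at hTS
  obtain ⟨⟨hl₁, hc₁⟩, ⟨hl₂, hc₂⟩, ⟨hl₃, hc₃⟩⟩ := hTS
  refine (K13plus2P1_isIndContained_s11 (hS.mono ?_) hl₁₂ hl₁₃ hl₂₃ hp hc₁ hc₂ hc₃ hcp₁ hcp₂).elim
    hfree.false
  simp [Set.insert_subset_iff, *]

theorem encard_inter_neighborSet_le_two_of_anticomplete (hfree : IsEmpty (K13plus2P1 ↪g G))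
    {S : Set V} (hS : G.IsIndepSet S) {x c p : V} (hxS : ∀ s ∈ S, s ≠ x ∧ ¬G.Adj x s)
    (hcx : ¬G.Adj c x) (hp : p ∈ S) (hcp : ¬G.Adj c p) :
    (S ∩ G.neighborSet c).encard ≤ 2 := by
  have hxS' : G.IsIndepSet (insert x S) :=
    hS.insert fun s hs _ => ⟨(hxS s hs).2, fun h => (hxS s hs).2 h.symm⟩
  calc (S ∩ G.neighborSet c).encard ≤ (insert x S ∩ G.neighborSet c).encard := by
        gcongr; exact Set.subset_insert x S
    _ ≤ 2 := encard_inter_neighborSet_le_two hfree hxS' (Set.mem_insert x S)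
        (Set.mem_insert_of_mem x hp) (hxS p hp).1.symm hcx hcp

end SimpleGraph

theorem statement_11_general {V : Type*} (G : SimpleGraph V)
    (hfree : IsEmpty (K13plus2P1 ↪g G)) (x x1 : V) (hx1 : G.Adj x x1)
    (A B : Set V)
    (hA : ∀ a ∈ A, a ≠ x ∧ ¬ G.Adj x a) (hB : ∀ b ∈ B, b ≠ x ∧ ¬ G.Adj x b)
    (hAind : A.Pairwise (fun u v => ¬ G.Adj u v))
    (hBind : B.Pairwise (fun u v => ¬ G.Adj u v))
    (hx1A : ∀ a ∈ A, G.Adj x1 a) (hx1B : ∀ b ∈ B, ¬ G.Adj x1 b)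
    (hAcard : 8 ≤ A.encard) (hBcard : 8 ≤ B.encard) :
    ∀ a ∈ A, ∀ b ∈ B, G.Adj a b := by
  intro a₀ ha₀ b₀ hb₀
  by_contra hab
  have few_nbrs_in_A {b : V} (hb : b ∈ B) (hab : ¬G.Adj a₀ b) :
      (A ∩ G.neighborSet b).encard ≤ 2 :=
    SimpleGraph.encard_inter_neighborSet_le_two_of_anticomplete hfree hAind hA
      (fun h => (hB b hb).2 h.symm) ha₀ (fun h => hab h.symm)
  obtain ⟨b₁, b₂, ⟨hb₁, hab₁⟩, ⟨hb₂, hab₂⟩, hb₁₂⟩ :=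
    Set.one_lt_encard_iff.1 <| Set.one_lt_encard_sdiff (k := 2)
      (SimpleGraph.encard_inter_neighborSet_le_two_of_anticomplete hfree hBind hB
        (fun h => (hA a₀ ha₀).2 h.symm) hb₀ hab) (le_trans (by norm_num) hBcard)
  obtain ⟨a₁, a₂, ⟨ha₁, hba₁⟩, ⟨ha₂, hba₂⟩, ha₁₂⟩ :=
    Set.one_lt_encard_iff.1 <| Set.one_lt_encard_sdiff (t := G.neighborSet b₁ ∪ G.neighborSet b₂)
      (k := 4) (by
        rw [Set.inter_union_distrib_left]
        exact (Set.encard_union_le _ _).trans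
          (add_le_add (few_nbrs_in_A hb₁ hab₁) (few_nbrs_in_A hb₂ hab₂)))
      (le_trans (by norm_num) hAcard)
  simp only [Set.mem_union, SimpleGraph.mem_neighborSet, not_or] at hba₁ hba₂
  have hI : G.IsIndepSet {x, a₁, a₂, b₁, b₂} := by
    intro u hu v hv huv
    simp only [Set.mem_insert_iff, Set.mem_singleton_iff] at hu hv
    grind [G.adj_symm, (hA a₁ ha₁).2, (hA a₂ ha₂).2, (hB b₁ hb₁).2, (hB b₂ hb₂).2,
      hAind ha₁ ha₂ ha₁₂, hBind hb₁ hb₂ hb₁₂]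
  exact (SimpleGraph.K13plus2P1_isIndContained_s11 hI (hA a₁ ha₁).1.symm (hA a₂ ha₂).1.symm ha₁₂
    hb₁₂ hx1.symm (hx1A a₁ ha₁) (hx1A a₂ ha₂) (hx1B b₁ hb₁) (hx1B b₂ hb₂)).elim hfree.false

theorem statement_11 {V : Type*} (G : SimpleGraph V) (htri : G.CliqueFree 3)
    (hfree : IsEmpty (K13plus2P1 ↪g G)) (x x1 : V) (hx1 : G.Adj x x1)
    (A B : Set V)
    (hA : ∀ a ∈ A, a ≠ x ∧ ¬ G.Adj x a) (hB : ∀ b ∈ B, b ≠ x ∧ ¬ G.Adj x b)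
    (hdisj : Disjoint A B)
    (hAind : A.Pairwise (fun u v => ¬ G.Adj u v))
    (hBind : B.Pairwise (fun u v => ¬ G.Adj u v))
    (hx1A : ∀ a ∈ A, G.Adj x1 a) (hx1B : ∀ b ∈ B, ¬ G.Adj x1 b)
    (hAcard : 8 ≤ A.encard) (hBcard : 8 ≤ B.encard) :
    ∀ a ∈ A, ∀ b ∈ B, G.Adj a b :=
  statement_11_general G hfree x x1 hx1 A B hA hB hAind hBind hx1A hx1B hAcard hBcard
end

section
/- Let G be a (K_3, K_{1,3}+3P_1)-free graph containing a vertex x. Let A and B be disjoint independent subsets of V(G) \ N[x], each of size at least 9, such that some vertex x_1 ∈ N(x) is complete to A and anticomplete to B. Then there exist vertices a ∈ A and b ∈ B such that every vertex of A \ {a} is adjacent to all but at most one vertex of B \ {b} and vice versa; in particular G[(A\{a}) ∪ (B\{b})] is a complete bipartite graph minus a matching. -/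
/-- K_{1,3} + 3P₁: a claw (0 adjacent to 1, 2, 3) plus three isolated vertices. -/
def K13plus3P1 : SimpleGraph (Fin 7) :=
  SimpleGraph.fromRel (fun a b => (a.val, b.val) ∈ [(0,1),(0,2),(0,3)])

/-!
A vertex `a ∈ A` with two non-neighbours `b₁, b₂ ∈ B` has at most two neighbours in `B`:
three of them would be the leaves of a claw at `a`, with `x, b₁, b₂` as isolated vertices.
So two vertices `a, a₀ ∈ A` that each miss two vertices of `B` have three common
non-neighbours in `B`, and these, with the claw at `x₁` with leaves `x, a, a₀`, form a
`K_{1,3} + 3P₁`. Hence at most one vertex of `A` misses two vertices of `B`. By the same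
count, two vertices of `B` that each miss two vertices of `A` have three common
non-neighbours in `A`, each of which misses two vertices of `B`: impossible.
-/

section

variable {α V : Type*} {G : SimpleGraph V}

theorem Set.exists_three_of_three_le_encard {s : Set α} (h : 3 ≤ s.encard) :
    ∃ a ∈ s, ∃ b ∈ s, ∃ c ∈ s, a ≠ b ∧ a ≠ c ∧ b ≠ c := by
  obtain ⟨t, hts, ht⟩ := Set.exists_subset_encard_eq h
  obtain ⟨a, b, c, hab, hac, hbc, rfl⟩ := Set.encard_eq_three.1 ht
  exact ⟨a, hts (by simp), b, hts (by simp), c, hts (by simp), hab, hac, hbc⟩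

theorem Set.Subsingleton.exists_forall_mem_diff_singleton {s : Set α} {p : α → Prop}
    (h : {a ∈ s | p a}.Subsingleton) (hs : s.Nonempty) : ∃ a₀ ∈ s, ∀ a ∈ s \ {a₀}, ¬ p a := by
  by_cases hp : ∃ a ∈ s, p a
  · obtain ⟨a₀, ha₀, hpa₀⟩ := hp
    exact ⟨a₀, ha₀, fun a ha hpa => ha.2 (h ⟨ha.1, hpa⟩ ⟨ha₀, hpa₀⟩)⟩
  · push Not at hp
    obtain ⟨a₀, ha₀⟩ := hs
    exact ⟨a₀, ha₀, fun a ha => hp a ha.1⟩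

theorem Set.two_lt_encard_sep_not_and_not {S : Set α} {p q : α → Prop} (hS : 7 ≤ S.encard)
    (hp : {s ∈ S | p s}.encard ≤ 2) (hq : {s ∈ S | q s}.encard ≤ 2) :
    2 < {s ∈ S | ¬ p s ∧ ¬ q s}.encard := by
  have hcover : S ⊆ {s ∈ S | p s} ∪ {s ∈ S | q s} ∪ {s ∈ S | ¬ p s ∧ ¬ q s} := by
    intro s hs
    by_cases hps : p s <;> by_cases hqs : q s <;> simp [hs, hps, hqs]
  by_contra! h
  have : S.encard ≤ 6 := calc
    S.encard ≤ {s ∈ S | p s}.encard + {s ∈ S | q s}.encard + {s ∈ S | ¬ p s ∧ ¬ q s}.encard :=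
      (Set.encard_mono hcover).trans <|
        (Set.encard_union_le _ _).trans (by gcongr; exact Set.encard_union_le _ _)
    _ ≤ 2 + 2 + 2 := add_le_add (add_le_add hp hq) h
    _ = 6 := by norm_num
  exact absurd (hS.trans this) (by norm_num)

theorem nonempty_K13plus3P1_embedding {c : V} {L I : Set V}
    (hcL : ∀ l ∈ L, G.Adj c l) (hL : L.Pairwise (fun u v => ¬ G.Adj u v)) (hL3 : 3 ≤ L.encard)
    (hcI : c ∉ I) (hI : I.Pairwise (fun u v => ¬ G.Adj u v)) (hI3 : 3 ≤ I.encard)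
    (hIc : ∀ i ∈ I, ¬ G.Adj c i) (hLI : ∀ l ∈ L, ∀ i ∈ I, ¬ G.Adj l i) :
    Nonempty (K13plus3P1 ↪g G) := by
  have hN : ∀ u ∈ L ∪ I, ∀ v ∈ L ∪ I, ¬ G.Adj u v := by
    rintro u (hu | hu) v (hv | hv) huv
    exacts [hL hu hv huv.ne huv, hLI u hu v hv huv, hLI v hv u hu huv.symm, hI hu hv huv.ne huv]
  obtain ⟨l₁, h₁, l₂, h₂, l₃, h₃, h₁₂, h₁₃, h₂₃⟩ := Set.exists_three_of_three_le_encard hL3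
  obtain ⟨i₁, g₁, i₂, g₂, i₃, g₃, g₁₂, g₁₃, g₂₃⟩ := Set.exists_three_of_three_le_encard hI3
  have hli : ∀ l ∈ L, ∀ i ∈ I, l ≠ i := fun l hl i hi h => hIc i hi (h ▸ hcL l hl)
  have hci : ∀ i ∈ I, c ≠ i := fun i hi h => hcI (h ▸ hi)
  have hcl : ∀ l ∈ L, c ≠ l := fun l hl => (hcL l hl).ne
  let f : Fin 7 → V := ![c, l₁, l₂, l₃, i₁, i₂, i₃]
  have hf : Function.Injective f := by
    rw [← List.nodup_ofFn]
    simp [f, List.ofFn_succ, *]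
  refine ⟨⟨⟨f, hf⟩, fun {a b} => ?_⟩⟩
  show G.Adj (f a) (f b) ↔ _
  fin_cases a <;> fin_cases b <;> simp [K13plus3P1, f, G.adj_comm _ c, *]

theorem encard_sep_adj_le_two (hfree : IsEmpty (K13plus3P1 ↪g G)) {x v : V} {S : Set V}
    (hS : S.Pairwise (fun u w => ¬ G.Adj u w)) (hxS : ∀ s ∈ S, s ≠ x ∧ ¬ G.Adj x s)
    (hv : v ≠ x ∧ ¬ G.Adj x v) (hvS : v ∉ S)
    (hnon : 1 < {s ∈ S | ¬ G.Adj v s}.encard) : {s ∈ S | G.Adj v s}.encard ≤ 2 := by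
  by_contra! hadj
  have hxN : x ∉ {s ∈ S | ¬ G.Adj v s} := fun h => (hxS x h.1).1 rfl
  refine hfree.false (nonempty_K13plus3P1_embedding (c := v)
    (I := insert x {s ∈ S | ¬ G.Adj v s}) (fun l hl => hl.2) (hS.mono (Set.sep_subset _ _))
    (Order.add_one_le_of_lt hadj) ?_ ?_ ?_ ?_ ?_).some
  · rintro (h | h)
    exacts [hv.1 h, hvS h.1]
  · refine (Set.pairwise_insert_of_notMem hxN).2 ⟨hS.mono (Set.sep_subset _ _), fun s hs => ?_⟩
    exact ⟨(hxS s hs.1).2, fun h => (hxS s hs.1).2 h.symm⟩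
  · rw [Set.encard_insert_of_notMem hxN]
    have h2 : 2 ≤ {s ∈ S | ¬ G.Adj v s}.encard := Order.add_one_le_of_lt hnon
    calc (3 : ℕ∞) = 2 + 1 := by norm_num
      _ ≤ _ := by gcongr
  · rintro i (rfl | hi)
    exacts [fun h => hv.2 h.symm, hi.2]
  · rintro l hl i (rfl | hi)
    · exact fun h => (hxS l hl.1).2 h.symm
    · exact hS hl.1 hi.1 (fun h => hi.2 (h ▸ hl.2))

theorem subsingleton_two_nonneighbours_left (hfree : IsEmpty (K13plus3P1 ↪g G)) {x x₁ : V}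
    {A B : Set V} (hA : ∀ a ∈ A, a ≠ x ∧ ¬ G.Adj x a) (hB : ∀ b ∈ B, b ≠ x ∧ ¬ G.Adj x b)
    (hdisj : Disjoint A B) (hAind : A.Pairwise (fun u v => ¬ G.Adj u v))
    (hBind : B.Pairwise (fun u v => ¬ G.Adj u v)) (hx₁ : G.Adj x x₁)
    (hx₁A : ∀ a ∈ A, G.Adj x₁ a) (hx₁B : ∀ b ∈ B, ¬ G.Adj x₁ b) (hBcard : 7 ≤ B.encard) :
    {a ∈ A | 1 < {b ∈ B | ¬ G.Adj a b}.encard}.Subsingleton := by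
  rintro a ⟨ha, hna⟩ a₀ ⟨ha₀, hna₀⟩
  by_contra hne
  have hC := Set.two_lt_encard_sep_not_and_not hBcard
    (encard_sep_adj_le_two hfree hBind hB (hA a ha) (hdisj.notMem_of_mem_left ha) hna)
    (encard_sep_adj_le_two hfree hBind hB (hA a₀ ha₀) (hdisj.notMem_of_mem_left ha₀) hna₀)
  refine hfree.false (nonempty_K13plus3P1_embedding (c := x₁) (L := {x, a, a₀})
    ?_ ?_ ?_ ?_ (hBind.mono (Set.sep_subset _ _)) (Order.add_one_le_of_lt hC)
    (fun b hb => hx₁B b hb.1) ?_).some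
  · simp only [Set.mem_insert_iff, Set.mem_singleton_iff]
    rintro l (rfl | rfl | rfl)
    exacts [hx₁.symm, hx₁A l ha, hx₁A l ha₀]
  · have hxa := (hA a ha).2
    have hxa₀ := (hA a₀ ha₀).2
    have haa₀ := hAind ha ha₀ hne
    simp [Set.pairwise_insert, G.adj_comm _ x, G.adj_comm a₀ a, *]
  · exact (Set.encard_eq_three.2 ⟨x, a, a₀, (hA a ha).1.symm, (hA a₀ ha₀).1.symm, hne, rfl⟩).ge
  · exact fun h => (hB x₁ h.1).2 hx₁
  · simp only [Set.mem_insert_iff, Set.mem_singleton_iff]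
    rintro l (rfl | rfl | rfl) b hb
    exacts [(hB b hb.1).2, hb.2.1, hb.2.2]

theorem subsingleton_two_nonneighbours_right (hfree : IsEmpty (K13plus3P1 ↪g G)) {x : V}
    {A B : Set V} (hA : ∀ a ∈ A, a ≠ x ∧ ¬ G.Adj x a) (hB : ∀ b ∈ B, b ≠ x ∧ ¬ G.Adj x b)
    (hdisj : Disjoint A B) (hAind : A.Pairwise (fun u v => ¬ G.Adj u v)) (hAcard : 7 ≤ A.encard)
    (hleft : {a ∈ A | 1 < {b ∈ B | ¬ G.Adj a b}.encard}.Subsingleton) :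
    {b ∈ B | 1 < {a ∈ A | ¬ G.Adj a b}.encard}.Subsingleton := by
  rintro b ⟨hb, hnb⟩ b₀ ⟨hb₀, hnb₀⟩
  by_contra hne
  simp_rw [G.adj_comm _ b, G.adj_comm _ b₀] at hnb hnb₀
  have hC := Set.two_lt_encard_sep_not_and_not hAcard
    (encard_sep_adj_le_two hfree hAind hA (hB b hb) (hdisj.notMem_of_mem_right hb) hnb)
    (encard_sep_adj_le_two hfree hAind hA (hB b₀ hb₀) (hdisj.notMem_of_mem_right hb₀) hnb₀)
  have hCsub : {a ∈ A | ¬ G.Adj b a ∧ ¬ G.Adj b₀ a} ⊆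
      {a ∈ A | 1 < {b ∈ B | ¬ G.Adj a b}.encard} :=
    fun a ha => ⟨ha.1, Set.one_lt_encard_iff.2
      ⟨b, b₀, ⟨hb, fun h => ha.2.1 h.symm⟩, ⟨hb₀, fun h => ha.2.2 h.symm⟩, hne⟩⟩
  exact hC.not_ge ((Set.encard_le_one_iff_subsingleton.2 (hleft.anti hCsub)).trans (by norm_num))

end

theorem statement_12_general {V : Type*} (G : SimpleGraph V)
    (hfree : IsEmpty (K13plus3P1 ↪g G)) (x : V) (A B : Set V)
    (hA : ∀ a ∈ A, a ≠ x ∧ ¬ G.Adj x a) (hB : ∀ b ∈ B, b ≠ x ∧ ¬ G.Adj x b)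
    (hdisj : Disjoint A B)
    (hAind : A.Pairwise (fun u v => ¬ G.Adj u v))
    (hBind : B.Pairwise (fun u v => ¬ G.Adj u v))
    (x1 : V) (hx1 : G.Adj x x1)
    (hx1A : ∀ a ∈ A, G.Adj x1 a) (hx1B : ∀ b ∈ B, ¬ G.Adj x1 b)
    (hAcard : 9 ≤ A.encard) (hBcard : 9 ≤ B.encard) :
    ∃ a ∈ A, ∃ b ∈ B,
      (∀ a' ∈ A \ {a}, ({b' ∈ B \ {b} | ¬ G.Adj a' b'}).encard ≤ 1) ∧
      (∀ b' ∈ B \ {b}, ({a' ∈ A \ {a} | ¬ G.Adj a' b'}).encard ≤ 1) := by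
  have hleft := subsingleton_two_nonneighbours_left hfree hA hB hdisj hAind hBind hx1 hx1A
    hx1B (le_trans (by norm_num) hBcard)
  have hright := subsingleton_two_nonneighbours_right hfree hA hB hdisj hAind
    (le_trans (by norm_num) hAcard) hleft
  obtain ⟨a, ha, hgoodA⟩ := hleft.exists_forall_mem_diff_singleton
    (Set.nonempty_of_encard_ne_zero (by rintro h; simp [h] at hAcard))
  obtain ⟨b, hb, hgoodB⟩ := hright.exists_forall_mem_diff_singleton
    (Set.nonempty_of_encard_ne_zero (by rintro h; simp [h] at hBcard))
  refine ⟨a, ha, b, hb, fun a' ha' => ?_, fun b' hb' => ?_⟩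
  · refine (Set.encard_mono ?_).trans (not_lt.1 (hgoodA a' ha'))
    exact fun b' hb' => ⟨hb'.1.1, hb'.2⟩
  · refine (Set.encard_mono ?_).trans (not_lt.1 (hgoodB b' hb'))
    exact fun a' ha' => ⟨ha'.1.1, ha'.2⟩

theorem statement_12 {V : Type*} (G : SimpleGraph V) (htri : G.CliqueFree 3)
    (hfree : IsEmpty (K13plus3P1 ↪g G)) (x : V) (A B : Set V)
    (hA : ∀ a ∈ A, a ≠ x ∧ ¬ G.Adj x a) (hB : ∀ b ∈ B, b ≠ x ∧ ¬ G.Adj x b)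
    (hdisj : Disjoint A B)
    (hAind : A.Pairwise (fun u v => ¬ G.Adj u v))
    (hBind : B.Pairwise (fun u v => ¬ G.Adj u v))
    (x1 : V) (hx1 : G.Adj x x1)
    (hx1A : ∀ a ∈ A, G.Adj x1 a) (hx1B : ∀ b ∈ B, ¬ G.Adj x1 b)
    (hAcard : 9 ≤ A.encard) (hBcard : 9 ≤ B.encard) :
    ∃ a ∈ A, ∃ b ∈ B,
      (∀ a' ∈ A \ {a}, ({b' ∈ B \ {b} | ¬ G.Adj a' b'}).encard ≤ 1) ∧
      (∀ b' ∈ B \ {b}, ({a' ∈ A \ {a} | ¬ G.Adj a' b'}).encard ≤ 1) :=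
  statement_12_general G hfree x A B hA hB hdisj hAind hBind x1 hx1 hx1A hx1B hAcard hBcard
end

section
/- For every n ≥ 1, the graph G_n defined as follows contains no induced subgraph isomorphic to 3P_2: the vertex set is B ∪ W ∪ X where B = {b_1,…,b_n}, W = {w_1,…,w_n}, X = {x_{i,j} : 1 ≤ i,j ≤ n}; B and W are cliques, X is independent, there are no edges between B and W, b_k is adjacent to x_{i,j} iff i ≤ k, and w_k is adjacent to x_{i,j} iff j ≤ k. -/
/-- The graph `Gn n`: vertices are `B = Fin n` (left), `W = Fin n` (middle) and
`X = Fin n × Fin n` (right); `B` and `W` are cliques, `X` is independent, there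
are no edges between `B` and `W`, `b k` is adjacent to `x (i,j)` iff `i ≤ k`,
and `w k` is adjacent to `x (i,j)` iff `j ≤ k`. -/
def Gn (n : ℕ) : SimpleGraph (Fin n ⊕ Fin n ⊕ Fin n × Fin n) :=
  SimpleGraph.fromRel (fun u v =>
    match u, v with
    | Sum.inl _, Sum.inl _ => True
    | Sum.inr (Sum.inl _), Sum.inr (Sum.inl _) => True
    | Sum.inl k, Sum.inr (Sum.inr (i, _)) => i ≤ k
    | Sum.inr (Sum.inl k), Sum.inr (Sum.inr (_, j)) => j ≤ k
    | _, _ => False)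

/-- 3P₂: the disjoint union of three edges. -/
def threeP2 : SimpleGraph (Fin 6) :=
  SimpleGraph.fromRel (fun a b => (a.val, b.val) ∈ [(0,1),(2,3),(4,5)])

theorem statement_13 (n : ℕ) (hn : 1 ≤ n) :
    IsEmpty (threeP2 ↪g Gn n) := by
  constructor
  intro f
  -- Every Gn-edge has an endpoint in B or in W.
  have key : ∀ u v : Fin n ⊕ Fin n ⊕ Fin n × Fin n, (Gn n).Adj u v →
      ((∃ a, u = Sum.inl a) ∨ (∃ a, v = Sum.inl a)) ∨
      ((∃ b, u = Sum.inr (Sum.inl b)) ∨ (∃ b, v = Sum.inr (Sum.inl b))) := by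
    rintro (a | b | p) (a' | b' | p') h
    · exact Or.inl (Or.inl ⟨a, rfl⟩)
    · exact Or.inl (Or.inl ⟨a, rfl⟩)
    · exact Or.inl (Or.inl ⟨a, rfl⟩)
    · exact Or.inl (Or.inr ⟨a', rfl⟩)
    · exact Or.inr (Or.inl ⟨b, rfl⟩)
    · exact Or.inr (Or.inl ⟨b, rfl⟩)
    · exact Or.inl (Or.inr ⟨a', rfl⟩)
    · exact Or.inr (Or.inr ⟨b', rfl⟩)
    · rw [Gn, SimpleGraph.fromRel_adj] at h
      simp at h
  -- Two B vertices in different 3P2-edges give a contradiction (B is a clique).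
  have contraB : ∀ (s t : Fin 6) (a b : Fin n), f s = Sum.inl a → f t = Sum.inl b →
      ¬ threeP2.Adj s t → s ≠ t → False := by
    intro s t a b hs ht hna hst
    apply hna
    rw [← f.map_adj_iff, hs, ht, Gn, SimpleGraph.fromRel_adj]
    refine ⟨?_, Or.inl trivial⟩
    intro h; apply hst; apply f.injective; rw [hs, ht, h]
  have contraW : ∀ (s t : Fin 6) (a b : Fin n), f s = Sum.inr (Sum.inl a) →
      f t = Sum.inr (Sum.inl b) → ¬ threeP2.Adj s t → s ≠ t → False := by
    intro s t a b hs ht hna hst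
    apply hna
    rw [← f.map_adj_iff, hs, ht, Gn, SimpleGraph.fromRel_adj]
    refine ⟨?_, Or.inl trivial⟩
    intro h; apply hst; apply f.injective; rw [hs, ht, h]
  have na : ∀ s t : Fin 6, (s,t) ∈ [((0:Fin 6),(2:Fin 6)),(0,3),(0,4),(0,5),(1,2),(1,3),(1,4),(1,5),(2,4),(2,5),(3,4),(3,5)] → ¬ threeP2.Adj s t ∧ s ≠ t := by
    intro s t h
    fin_cases h <;> constructor <;>
      first
      | (rw [threeP2, SimpleGraph.fromRel_adj]; decide)
      | decide
  have h01 : (Gn n).Adj (f 0) (f 1) := f.map_adj_iff.mpr (by rw [threeP2, SimpleGraph.fromRel_adj]; decide)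
  have h23 : (Gn n).Adj (f 2) (f 3) := f.map_adj_iff.mpr (by rw [threeP2, SimpleGraph.fromRel_adj]; decide)
  have h45 : (Gn n).Adj (f 4) (f 5) := f.map_adj_iff.mpr (by rw [threeP2, SimpleGraph.fromRel_adj]; decide)
  have e1 := key _ _ h01
  have e2 := key _ _ h23
  have e3 := key _ _ h45
  rcases e1 with (⟨a1, h1⟩ | ⟨a1, h1⟩) | (⟨b1, h1⟩ | ⟨b1, h1⟩) <;>
  rcases e2 with (⟨a2, h2⟩ | ⟨a2, h2⟩) | (⟨b2, h2⟩ | ⟨b2, h2⟩) <;>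
  rcases e3 with (⟨a3, h3⟩ | ⟨a3, h3⟩) | (⟨b3, h3⟩ | ⟨b3, h3⟩) <;>
    first
    | exact contraB _ _ _ _ h1 h2 (na _ _ (by decide)).1 (na _ _ (by decide)).2
    | exact contraB _ _ _ _ h1 h3 (na _ _ (by decide)).1 (na _ _ (by decide)).2
    | exact contraB _ _ _ _ h2 h3 (na _ _ (by decide)).1 (na _ _ (by decide)).2
    | exact contraW _ _ _ _ h1 h2 (na _ _ (by decide)).1 (na _ _ (by decide)).2
    | exact contraW _ _ _ _ h1 h3 (na _ _ (by decide)).1 (na _ _ (by decide)).2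
    | exact contraW _ _ _ _ h2 h3 (na _ _ (by decide)).1 (na _ _ (by decide)).2
end

section
/- For every n ≥ 1, the graph G_n defined as follows is P_6-free: the vertex set is B ∪ W ∪ X where B = {b_1,…,b_n}, W = {w_1,…,w_n}, X = {x_{i,j} : 1 ≤ i,j ≤ n}; B and W are cliques, X is independent, there are no edges between B and W, b_k is adjacent to x_{i,j} iff i ≤ k, and w_k is adjacent to x_{i,j} iff j ≤ k. -/
set_option maxHeartbeats 4000000 in
lemma aux (n : ℕ) (u0 u1 u2 u3 u4 u5 : Fin n ⊕ Fin n ⊕ Fin n × Fin n)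
    (e01 : (Gn n).Adj u0 u1) (e12 : (Gn n).Adj u1 u2) (e23 : (Gn n).Adj u2 u3)
    (e34 : (Gn n).Adj u3 u4) (e45 : (Gn n).Adj u4 u5)
    (n02 : ¬ (Gn n).Adj u0 u2) (n03 : ¬ (Gn n).Adj u0 u3) (n04 : ¬ (Gn n).Adj u0 u4)
    (n05 : ¬ (Gn n).Adj u0 u5) (n13 : ¬ (Gn n).Adj u1 u3) (n14 : ¬ (Gn n).Adj u1 u4)
    (n15 : ¬ (Gn n).Adj u1 u5) (n24 : ¬ (Gn n).Adj u2 u4) (n25 : ¬ (Gn n).Adj u2 u5)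
    (n35 : ¬ (Gn n).Adj u3 u5)
    (d02 : u0 ≠ u2) (d03 : u0 ≠ u3) (d04 : u0 ≠ u4) (d05 : u0 ≠ u5)
    (d13 : u1 ≠ u3) (d14 : u1 ≠ u4) (d15 : u1 ≠ u5)
    (d24 : u2 ≠ u4) (d25 : u2 ≠ u5) (d35 : u3 ≠ u5) : False := by
  rcases u0 with b0 | w0 | ⟨i0, j0⟩ <;> rcases u1 with b1 | w1 | ⟨i1, j1⟩ <;>
    first | (exfalso; revert e01; simp [Gn, SimpleGraph.fromRel_adj]; done) | skip
  all_goals rcases u2 with b2 | w2 | ⟨i2, j2⟩ <;>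
    first | (exfalso; revert e12; simp [Gn, SimpleGraph.fromRel_adj]; done) | skip
  all_goals rcases u3 with b3 | w3 | ⟨i3, j3⟩ <;>
    first | (exfalso; revert e23; simp [Gn, SimpleGraph.fromRel_adj]; done) | skip
  all_goals rcases u4 with b4 | w4 | ⟨i4, j4⟩ <;>
    first | (exfalso; revert e34; simp [Gn, SimpleGraph.fromRel_adj]; done) | skip
  all_goals rcases u5 with b5 | w5 | ⟨i5, j5⟩ <;>
    first | (exfalso; revert e45; simp [Gn, SimpleGraph.fromRel_adj]; done) | skip
  all_goals
    simp_all only [Gn, SimpleGraph.fromRel_adj, ne_eq, Sum.inl.injEq, Sum.inr.injEq,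
      Prod.mk.injEq, reduceCtorEq, not_false_eq_true, and_true, true_and, not_true_eq_false,
      not_and, not_or, or_false, false_or, or_self, and_self, not_false_iff, Prod.ext_iff,
      Fin.le_def, Fin.ext_iff, true_or, or_true, and_false, false_and] <;>
    omega

theorem statement_14 (n : ℕ) (hn : 1 ≤ n) :
    IsEmpty (SimpleGraph.pathGraph 6 ↪g Gn n) := by
  constructor
  intro f
  have key : ∀ i j : Fin 6, (Gn n).Adj (f i) (f j) ↔ (SimpleGraph.pathGraph 6).Adj i j :=
    fun i j => f.map_adj_iff
  have pos : ∀ i j : Fin 6, i.val + 1 = j.val ∨ j.val + 1 = i.val → (Gn n).Adj (f i) (f j) :=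
    fun i j h => (key i j).2 ((SimpleGraph.pathGraph_adj).2 h)
  have neg : ∀ i j : Fin 6, ¬(i.val + 1 = j.val ∨ j.val + 1 = i.val) → ¬ (Gn n).Adj (f i) (f j) :=
    fun i j h ha => h ((SimpleGraph.pathGraph_adj).1 ((key i j).1 ha))
  have dk : ∀ i j : Fin 6, i ≠ j → f i ≠ f j := fun i j h he => h (f.injective he)
  exact aux n (f 0) (f 1) (f 2) (f 3) (f 4) (f 5)
    (pos 0 1 (by decide)) (pos 1 2 (by decide)) (pos 2 3 (by decide))
    (pos 3 4 (by decide)) (pos 4 5 (by decide))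
    (neg 0 2 (by decide)) (neg 0 3 (by decide)) (neg 0 4 (by decide))
    (neg 0 5 (by decide)) (neg 1 3 (by decide)) (neg 1 4 (by decide))
    (neg 1 5 (by decide)) (neg 2 4 (by decide)) (neg 2 5 (by decide))
    (neg 3 5 (by decide))
    (dk 0 2 (by decide)) (dk 0 3 (by decide)) (dk 0 4 (by decide)) (dk 0 5 (by decide))
    (dk 1 3 (by decide)) (dk 1 4 (by decide)) (dk 1 5 (by decide))
    (dk 2 4 (by decide)) (dk 2 5 (by decide)) (dk 3 5 (by decide))
end

section
/- For every n ≥ 1, the graph G_n defined as follows contains no induced subgraph isomorphic to the complement of P_1+P_4: the vertex set is B ∪ W ∪ X where B = {b_1,…,b_n}, W = {w_1,…,w_n}, X = {x_{i,j} : 1 ≤ i,j ≤ n}; B and W are cliques, X is independent, there are no edges between B and W, b_k is adjacent to x_{i,j} iff i ≤ k, and w_k is adjacent to x_{i,j} iff j ≤ k. -/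
/-- The complement of P₁ + P₄: vertex 0 is adjacent to 1, 2, 3, 4, and the
edges among {1,2,3,4} are the complement of the path 1-2-3-4, i.e. 13, 14, 24. -/
def coP1P4 : SimpleGraph (Fin 5) :=
  SimpleGraph.fromRel (fun a b =>
    (a.val, b.val) ∈ [(0,1),(0,2),(0,3),(0,4),(1,3),(1,4),(2,4)])

section aux
variable {n : ℕ}

lemma gnBB (a b : Fin n) : (Gn n).Adj (.inl a) (.inl b) ↔ a ≠ b := by
  simp [Gn, SimpleGraph.fromRel_adj]
lemma gnWW (a b : Fin n) : (Gn n).Adj (.inr (.inl a)) (.inr (.inl b)) ↔ a ≠ b := by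
  simp [Gn, SimpleGraph.fromRel_adj]
lemma gnBW (a b : Fin n) : ¬ (Gn n).Adj (.inl a) (.inr (.inl b)) := by
  simp [Gn, SimpleGraph.fromRel_adj]
lemma gnWB (a b : Fin n) : ¬ (Gn n).Adj (.inr (.inl a)) (.inl b) := by
  simp [Gn, SimpleGraph.fromRel_adj]
lemma gnBX (k i j : Fin n) : (Gn n).Adj (.inl k) (.inr (.inr (i, j))) ↔ i ≤ k := by
  simp [Gn, SimpleGraph.fromRel_adj]
lemma gnXB (k i j : Fin n) : (Gn n).Adj (.inr (.inr (i, j))) (.inl k) ↔ i ≤ k := by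
  simp [Gn, SimpleGraph.fromRel_adj]
lemma gnWX (k i j : Fin n) : (Gn n).Adj (.inr (.inl k)) (.inr (.inr (i, j))) ↔ j ≤ k := by
  simp [Gn, SimpleGraph.fromRel_adj]
lemma gnXW (k i j : Fin n) : (Gn n).Adj (.inr (.inr (i, j))) (.inr (.inl k)) ↔ j ≤ k := by
  simp [Gn, SimpleGraph.fromRel_adj]
lemma gnXX (p q : Fin n × Fin n) : ¬ (Gn n).Adj (.inr (.inr p)) (.inr (.inr q)) := by
  obtain ⟨i, j⟩ := p; obtain ⟨a, b⟩ := q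
  simp [Gn, SimpleGraph.fromRel_adj]

end aux

set_option maxHeartbeats 4000000 in
theorem statement_15 (n : ℕ) (hn : 1 ≤ n) :
    IsEmpty (coP1P4 ↪g Gn n) := by
  constructor
  intro f
  have inj := f.injective
  have madj : ∀ {a b : Fin 5}, (Gn n).Adj (f a) (f b) ↔ coP1P4.Adj a b :=
    fun {a b} => f.map_rel_iff
  have cadj : ∀ a b : Fin 5, (a.val, b.val) ∈ [(0,1),(0,2),(0,3),(0,4),(1,3),(1,4),(2,4)] →
      coP1P4.Adj a b := by
    simp only [coP1P4, SimpleGraph.fromRel_adj]; decide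
  have cnadj : ¬ coP1P4.Adj 1 2 ∧ ¬ coP1P4.Adj 2 3 ∧ ¬ coP1P4.Adj 3 4 := by
    simp only [coP1P4, SimpleGraph.fromRel_adj]; decide
  have h01 : (Gn n).Adj (f 0) (f 1) := madj.mpr (cadj 0 1 (by decide))
  have h02 : (Gn n).Adj (f 0) (f 2) := madj.mpr (cadj 0 2 (by decide))
  have h03 : (Gn n).Adj (f 0) (f 3) := madj.mpr (cadj 0 3 (by decide))
  have h04 : (Gn n).Adj (f 0) (f 4) := madj.mpr (cadj 0 4 (by decide))
  have h13 : (Gn n).Adj (f 1) (f 3) := madj.mpr (cadj 1 3 (by decide))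
  have h14 : (Gn n).Adj (f 1) (f 4) := madj.mpr (cadj 1 4 (by decide))
  have h24 : (Gn n).Adj (f 2) (f 4) := madj.mpr (cadj 2 4 (by decide))
  have n12 : ¬ (Gn n).Adj (f 1) (f 2) := fun h => cnadj.1 (madj.mp h)
  have n23 : ¬ (Gn n).Adj (f 2) (f 3) := fun h => cnadj.2.1 (madj.mp h)
  have n34 : ¬ (Gn n).Adj (f 3) (f 4) := fun h => cnadj.2.2 (madj.mp h)
  have ne12 : f 1 ≠ f 2 := fun h => by have := inj h; simp at this
  have ne23 : f 2 ≠ f 3 := fun h => by have := inj h; simp at this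
  have ne34 : f 3 ≠ f 4 := fun h => by have := inj h; simp at this
  clear madj inj cadj cnadj
  set v0 := f 0 with hv0; clear_value v0
  set v1 := f 1 with hv1; clear_value v1
  set v2 := f 2 with hv2; clear_value v2
  set v3 := f 3 with hv3; clear_value v3
  set v4 := f 4 with hv4; clear_value v4
  clear hv0 hv1 hv2 hv3 hv4 f
  rcases v0 with k0 | k0 | ⟨i0, j0⟩ <;>
  rcases v1 with k1 | k1 | ⟨i1, j1⟩ <;>
  rcases v2 with k2 | k2 | ⟨i2, j2⟩ <;>
  rcases v3 with k3 | k3 | ⟨i3, j3⟩ <;>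
  rcases v4 with k4 | k4 | ⟨i4, j4⟩ <;>
  simp only [gnBB, gnWW, gnBX, gnXB, gnWX, gnXW, ne_eq, Sum.inl.injEq, Sum.inr.injEq,
    Prod.mk.injEq, not_not, not_and, not_le, Fin.le_def, Fin.lt_def, Fin.ext_iff,
    not_true_eq_false, not_false_eq_true]
    at h01 h02 h03 h04 h13 h14 h24 n12 n23 n34 ne12 ne23 ne34 <;>
  first
    | exact gnBW _ _ h01 | exact gnWB _ _ h01 | exact gnXX _ _ h01
    | exact gnBW _ _ h02 | exact gnWB _ _ h02 | exact gnXX _ _ h02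
    | exact gnBW _ _ h03 | exact gnWB _ _ h03 | exact gnXX _ _ h03
    | exact gnBW _ _ h04 | exact gnWB _ _ h04 | exact gnXX _ _ h04
    | exact gnBW _ _ h13 | exact gnWB _ _ h13 | exact gnXX _ _ h13
    | exact gnBW _ _ h14 | exact gnWB _ _ h14 | exact gnXX _ _ h14
    | exact gnBW _ _ h24 | exact gnWB _ _ h24 | exact gnXX _ _ h24
    | omega
end

section
/- Let G be a triangle-free graph that contains no induced K_{1,3}+3P_1, let x ∈ V(G) have three neighbours x_1,x_2,x_3, and let Y be the set of vertices in V(G) \ N[x] with no neighbour in {x_1,x_2,x_3}. Then the induced subgraph G[Y] has no independent set of size 3, and consequently |Y| ≤ 5. -/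
namespace SimpleGraph

variable {V : Type*} {G : SimpleGraph V} {s : Set V}

theorem isNIndepSet_triple [DecidableEq V] {a b c : V} (hab : a ≠ b) (hac : a ≠ c)
    (hbc : b ≠ c) (nab : ¬ G.Adj a b) (nac : ¬ G.Adj a c) (nbc : ¬ G.Adj b c) :
    G.IsNIndepSet 3 {a, b, c} :=
  (G.isNClique_compl).mp (is3Clique_triple_iff.mpr ⟨⟨hab, nab⟩, ⟨hac, nac⟩, ⟨hbc, nbc⟩⟩)

theorem indepSetFreeOn_compl : Gᶜ.IndepSetFreeOn s 3 ↔ G.CliqueFreeOn s 3 := by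
  simp [IndepSetFreeOn, CliqueFreeOn]

theorem cliqueFreeOn_compl : Gᶜ.CliqueFreeOn s 3 ↔ G.IndepSetFreeOn s 3 := by
  simp [IndepSetFreeOn, CliqueFreeOn]

theorem encard_neighborSet_inter_le_two (hc : G.CliqueFreeOn s 3) (hi : G.IndepSetFreeOn s 3)
    {v : V} (hv : v ∈ s) : (G.neighborSet v ∩ s).encard ≤ 2 := by
  classical
  by_contra! h
  obtain ⟨t, hts, ht⟩ := Set.exists_subset_encard_eq (Order.add_one_le_of_lt h)
  obtain ⟨a, b, c, hab, hac, hbc, rfl⟩ := Set.encard_eq_three.mp ht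
  simp only [Set.insert_subset_iff, Set.singleton_subset_iff, Set.mem_inter_iff,
    mem_neighborSet] at hts
  obtain ⟨⟨hva, has⟩, ⟨hvb, hbs⟩, ⟨hvc, hcs⟩⟩ := hts
  have no_edge {p q : V} (hp : p ∈ s) (hq : q ∈ s) (hvp : G.Adj v p) (hvq : G.Adj v q) :
      ¬ G.Adj p q := fun hpq ↦
    hc (t := {v, p, q}) (by simp [Set.insert_subset_iff, hv, hp, hq])
      (is3Clique_triple_iff.mpr ⟨hvp, hvq, hpq⟩)
  exact hi (t := {a, b, c}) (by simp [Set.insert_subset_iff, has, hbs, hcs])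
    (isNIndepSet_triple hab hac hbc (no_edge has hbs hva hvb) (no_edge has hcs hva hvc)
      (no_edge hbs hcs hvb hvc))

theorem encard_le_five_of_cliqueFreeOn_of_indepSetFreeOn (hc : G.CliqueFreeOn s 3)
    (hi : G.IndepSetFreeOn s 3) : s.encard ≤ 5 := by
  rcases s.eq_empty_or_nonempty with rfl | ⟨v, hv⟩
  · simp
  have hsplit : s ⊆ {v} ∪ (G.neighborSet v ∩ s) ∪ (Gᶜ.neighborSet v ∩ s) := by
    intro w hw
    by_cases hvw : v = w
    · simp [hvw]
    · by_cases hadj : G.Adj v w <;> simp [hw, hadj, hvw]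
  calc s.encard ≤ ({v} ∪ (G.neighborSet v ∩ s) ∪ (Gᶜ.neighborSet v ∩ s)).encard :=
        Set.encard_le_encard hsplit
    _ ≤ 1 + 2 + 2 := by
        grw [Set.encard_union_le, Set.encard_union_le, Set.encard_singleton,
          encard_neighborSet_inter_le_two hc hi hv,
          encard_neighborSet_inter_le_two (cliqueFreeOn_compl.mpr hi)
            (indepSetFreeOn_compl.mpr hc) hv]
    _ = 5 := by norm_num

theorem indepSetFreeOn_of_isEmpty_K13plus3P1_embedding (hfree : IsEmpty (K13plus3P1 ↪g G))
    {x x1 x2 x3 : V} (h1 : G.Adj x x1) (h2 : G.Adj x x2) (h3 : G.Adj x x3)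
    (h12 : x1 ≠ x2) (h13 : x1 ≠ x3) (h23 : x2 ≠ x3)
    (n12 : ¬ G.Adj x1 x2) (n13 : ¬ G.Adj x1 x3) (n23 : ¬ G.Adj x2 x3)
    (hs : ∀ y ∈ s, ¬ G.Adj x y ∧ ¬ G.Adj y x1 ∧ ¬ G.Adj y x2 ∧ ¬ G.Adj y x3) :
    G.IndepSetFreeOn s 3 := by
  classical
  intro t hts ht
  obtain ⟨y1, y2, y3, hy12, hy13, hy23, rfl⟩ := Finset.card_eq_three.mp ht.card_eq
  have m12 : ¬ G.Adj y1 y2 := ht.isIndepSet (by simp) (by simp) hy12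
  have m13 : ¬ G.Adj y1 y3 := ht.isIndepSet (by simp) (by simp) hy13
  have m23 : ¬ G.Adj y2 y3 := ht.isIndepSet (by simp) (by simp) hy23
  obtain ⟨a1, b1, c1, d1⟩ := hs y1 (hts (by simp))
  obtain ⟨a2, b2, c2, d2⟩ := hs y2 (hts (by simp))
  obtain ⟨a3, b3, c3, d3⟩ := hs y3 (hts (by simp))
  rw [G.adj_comm] at b1 c1 d1 b2 c2 d2 b3 c3 d3
  have hinj : Function.Injective ![x, x1, x2, x3, y1, y2, y3] := by
    intro i j hij
    fin_cases i <;> fin_cases j <;> simp at hij ⊢ <;> subst hij <;> simp_all [G.adj_comm]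
  exact hfree.false ⟨⟨_, hinj⟩, fun {i j} ↦ by
    fin_cases i <;> fin_cases j <;> simp [K13plus3P1, G.adj_comm, *]⟩

end SimpleGraph

open SimpleGraph in
theorem statement_19 {V : Type*} (G : SimpleGraph V) (htri : G.CliqueFree 3)
    (hfree : IsEmpty (K13plus3P1 ↪g G)) (x x1 x2 x3 : V)
    (h1 : G.Adj x x1) (h2 : G.Adj x x2) (h3 : G.Adj x x3)
    (h12 : x1 ≠ x2) (h13 : x1 ≠ x3) (h23 : x2 ≠ x3) (Y : Set V)
    (hY : Y = {y | y ≠ x ∧ ¬ G.Adj x y ∧ ¬ G.Adj y x1 ∧ ¬ G.Adj y x2 ∧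
      ¬ G.Adj y x3}) :
    (¬ ∃ y1 ∈ Y, ∃ y2 ∈ Y, ∃ y3 ∈ Y, y1 ≠ y2 ∧ y1 ≠ y3 ∧ y2 ≠ y3 ∧
      ¬ G.Adj y1 y2 ∧ ¬ G.Adj y1 y3 ∧ ¬ G.Adj y2 y3) ∧
    Y.encard ≤ 5 := by
  classical
  have hleaves := G.isIndepSet_neighborSet_of_triangleFree htri x
  have hind : G.IndepSetFreeOn Y 3 :=
    indepSetFreeOn_of_isEmpty_K13plus3P1_embedding hfree h1 h2 h3 h12 h13 h23
      (hleaves h1 h2 h12) (hleaves h1 h3 h13) (hleaves h2 h3 h23)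
      (fun y hy ↦ (hY ▸ hy).2)
  refine ⟨?_, encard_le_five_of_cliqueFreeOn_of_indepSetFreeOn htri.cliqueFreeOn hind⟩
  rintro ⟨y1, hy1, y2, hy2, y3, hy3, hy12, hy13, hy23, m12, m13, m23⟩
  exact hind (by simp [Set.insert_subset_iff, hy1, hy2, hy3])
    (isNIndepSet_triple hy12 hy13 hy23 m12 m13 m23)
end
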